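/- arXiv:2110.05701 — 6 statements merged into one kernel-verified Lean document; each statement's English description precedes it below -/
import Mathlib

section
/- In the noiseless MAXDIFF case, i.e. when S_ii = 0 for all i and S_ij = Θ_iΘ_jᵀ for all i ≠ j, the point (O_1,…,O_m) = (Θ_1,…,Θ_m) globally solves the OTSM problem: for every tuple (O_1,…,O_m) with O_i ∈ O_{d_i,r}, one has Σ_{i,j=1}^m tr(O_iᵀ S_ij O_j) ≤ Σ_{i,j=1}^m tr(Θ_iᵀ S_ij Θ_j) = m(m−1)r. -/
open Matrix BigOperators MeasureTheory ProbabilityTheory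

noncomputable section

/-- The index type of a `D × D` block matrix with blocks of sizes `d 0, …, d (m-1)`. -/
abbrev Idx {m : ℕ} (d : Fin m → ℕ) := (i : Fin m) × Fin (d i)

/-- The `(i,j)` block of a `D × D` matrix. -/
def blk {m : ℕ} {d : Fin m → ℕ} (S : Matrix (Idx d) (Idx d) ℝ) (i j : Fin m) :
    Matrix (Fin (d i)) (Fin (d j)) ℝ :=
  Matrix.of fun a b => S ⟨i, a⟩ ⟨j, b⟩

/-- The `i`-th `d i × r` block of a `D × r` matrix. -/
def rblk {m r : ℕ} {d : Fin m → ℕ} (V : Matrix (Idx d) (Fin r) ℝ) (i : Fin m) :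
    Matrix (Fin (d i)) (Fin r) ℝ :=
  Matrix.of fun a c => V ⟨i, a⟩ c

/-- Stacking matrices `O i ∈ ℝ^{d i × r}` into a `D × r` matrix. -/
def stack {m r : ℕ} {d : Fin m → ℕ} (O : ∀ i, Matrix (Fin (d i)) (Fin r) ℝ) :
    Matrix (Idx d) (Fin r) ℝ :=
  Matrix.of fun p c => O p.1 p.2 c

/-- Semi-orthogonality: `Oᵀ O = I`. -/
def SemiOrth {n r : ℕ} (O : Matrix (Fin n) (Fin r) ℝ) : Prop := Oᵀ * O = 1

/-- Frobenius norm of a real matrix. -/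
def frobNorm {α β : Type*} [Fintype α] [Fintype β] (A : Matrix α β ℝ) : ℝ :=
  Real.sqrt (∑ a, ∑ b, (A a b) ^ 2)

/-- Spectral (ℓ₂ operator) norm of a real matrix. -/
def specNorm {α β : Type*} [Fintype α] [Fintype β] [DecidableEq β] (A : Matrix α β ℝ) : ℝ :=
  ‖LinearMap.toContinuousLinearMap (Matrix.toEuclideanLin A)‖

/-- The OTSM objective `∑ i j, tr(Oᵢᵀ S_{ij} O_j)`. -/
def objVal {m r : ℕ} {d : Fin m → ℕ} (S : Matrix (Idx d) (Idx d) ℝ)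
    (O : ∀ i, Matrix (Fin (d i)) (Fin r) ℝ) : ℝ :=
  ∑ i, ∑ j, Matrix.trace ((O i)ᵀ * blk S i j * O j)

/-- Feasibility for the SDP relaxation. -/
def SDPFeasible {m : ℕ} {d : Fin m → ℕ} (r : ℕ) (U : Matrix (Idx d) (Idx d) ℝ) : Prop :=
  U.PosSemidef ∧ (∀ i, ((1 : Matrix (Fin (d i)) (Fin (d i)) ℝ) - blk U i i).PosSemidef) ∧
    ∀ i, Matrix.trace (blk U i i) = (r : ℝ)

/-- `U` solves the SDP relaxation. -/
def IsSDPSol {m : ℕ} {d : Fin m → ℕ} (r : ℕ) (S U : Matrix (Idx d) (Idx d) ℝ) : Prop :=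
  SDPFeasible r U ∧ ∀ U', SDPFeasible r U' → Matrix.trace (S * U') ≤ Matrix.trace (S * U)

/-- Feasibility for the rank-constrained problem. -/
def RankFeasible {m : ℕ} {d : Fin m → ℕ} (r : ℕ) (U : Matrix (Idx d) (Idx d) ℝ) : Prop :=
  SDPFeasible r U ∧ U.rank = r

/-- `U` solves the rank-constrained problem. -/
def IsRankSol {m : ℕ} {d : Fin m → ℕ} (r : ℕ) (S U : Matrix (Idx d) (Idx d) ℝ) : Prop :=
  RankFeasible r U ∧ ∀ U', RankFeasible r U' → Matrix.trace (S * U') ≤ Matrix.trace (S * U)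

/-- The MAXBET model: `S_{ij} = Θ_i Θ_jᵀ + W_{ij}` with `W` symmetric. -/
def MAXBET {m r : ℕ} {d : Fin m → ℕ} (S W : Matrix (Idx d) (Idx d) ℝ)
    (Θ : ∀ i, Matrix (Fin (d i)) (Fin r) ℝ) : Prop :=
  W.IsSymm ∧ ∀ i j, blk S i j = Θ i * (Θ j)ᵀ + blk W i j

/-- The MAXDIFF model: `S_{ii} = 0`, `S_{ij} = Θ_i Θ_jᵀ + W_{ij}` for `i ≠ j`,
`W` symmetric with `W_{ii} = 0`. -/
def MAXDIFF {m r : ℕ} {d : Fin m → ℕ} (S W : Matrix (Idx d) (Idx d) ℝ)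
    (Θ : ∀ i, Matrix (Fin (d i)) (Fin r) ℝ) : Prop :=
  W.IsSymm ∧ (∀ i, blk W i i = 0) ∧ (∀ i, blk S i i = 0) ∧
    ∀ i j, i ≠ j → blk S i j = Θ i * (Θ j)ᵀ + blk W i j

/-- The Lagrange multiplier `Λ_i = O_iᵀ (∑ j, S_{ij} O_j)`. -/
def lagrange {m r : ℕ} {d : Fin m → ℕ} (S : Matrix (Idx d) (Idx d) ℝ)
    (O : ∀ i, Matrix (Fin (d i)) (Fin r) ℝ) (i : Fin m) : Matrix (Fin r) (Fin r) ℝ :=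
  (O i)ᵀ * ∑ j, blk S i j * O j

/-- `(O_1, …, O_m)` is a critical point of the OTSM problem. -/
def IsCritical {m r : ℕ} {d : Fin m → ℕ} (S : Matrix (Idx d) (Idx d) ℝ)
    (O : ∀ i, Matrix (Fin (d i)) (Fin r) ℝ) : Prop :=
  (∀ i, SemiOrth (O i)) ∧
    ∀ i, (lagrange S O i).IsSymm ∧ O i * lagrange S O i = ∑ j, blk S i j * O j

/-- `(O_1, …, O_m)` is a candidate critical point of the OTSM problem. -/
def IsCandidate {m r : ℕ} {d : Fin m → ℕ} (S : Matrix (Idx d) (Idx d) ℝ)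
    (O : ∀ i, Matrix (Fin (d i)) (Fin r) ℝ) : Prop :=
  IsCritical S O ∧ ∀ i, (lagrange S O i).PosSemidef

/-- Assumption 1: `tr(Θᵀ S Θ) ≤ tr(Oᵀ S O)`. -/
def Assumption1 {m r : ℕ} {d : Fin m → ℕ} (S : Matrix (Idx d) (Idx d) ℝ)
    (Θ O : ∀ i, Matrix (Fin (d i)) (Fin r) ℝ) : Prop :=
  Matrix.trace ((stack Θ)ᵀ * S * stack Θ) ≤ Matrix.trace ((stack O)ᵀ * S * stack O)

/-- `Θ`-discordance of a noise matrix `W`. -/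
def Discordant {m r : ℕ} {d : Fin m → ℕ} (Θ : ∀ i, Matrix (Fin (d i)) (Fin r) ℝ)
    (W : Matrix (Idx d) (Idx d) ℝ) : Prop :=
  W.IsSymm ∧ specNorm W ≤ 3 * Real.sqrt (∑ i, (d i : ℝ)) ∧
    ∀ i, frobNorm (rblk (W * stack Θ) i) ≤
      3 * Real.sqrt ((∑ i, (d i : ℝ)) * r * Real.log m)

/-- The deterministic noise condition (3.1) of Theorem 3.1. -/
def DetCond31 {m r : ℕ} {d : Fin m → ℕ} (Θ : ∀ i, Matrix (Fin (d i)) (Fin r) ℝ)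
    (W : Matrix (Idx d) (Idx d) ℝ) : Prop :=
  specNorm W * (4 * Real.sqrt r + 1) + 1 < (m : ℝ) ∧
  4 * m * ((⨆ i, frobNorm (rblk (W * stack Θ) i)) + 4 * specNorm W ^ 2 * Real.sqrt ((r : ℝ) / m)) /
        ((m : ℝ) - specNorm W * (4 * Real.sqrt r + 1) - 1) +
      2 * ((⨆ i, frobNorm (rblk (W * stack Θ) i)) + 4 * specNorm W ^ 2 * Real.sqrt ((r : ℝ) / m)) +
      8 * specNorm W * Real.sqrt ((r : ℝ) / m) + 2 * specNorm W < (m : ℝ)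

/-- The deterministic noise condition (3.4) of Theorem 3.2. -/
def DetCond32 {m r : ℕ} {d : Fin m → ℕ} (Θ : ∀ i, Matrix (Fin (d i)) (Fin r) ℝ)
    (W : Matrix (Idx d) (Idx d) ℝ) : Prop :=
  4 * specNorm W * Real.sqrt r < (m : ℝ) ∧
  specNorm W * (4 * Real.sqrt r + 1) +
      ((⨆ i, frobNorm (rblk (W * stack Θ) i)) + 4 * specNorm W ^ 2 * Real.sqrt ((r : ℝ) / m)) +
      2 * m * ((⨆ i, frobNorm (rblk (W * stack Θ) i)) + 4 * specNorm W ^ 2 * Real.sqrt ((r : ℝ) / m)) /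
        ((m : ℝ) - 4 * specNorm W * Real.sqrt r) +
      16 * specNorm W ^ 2 * (r : ℝ) / m ≤ (m : ℝ)

/-- The "upper triangular" order on block indices. -/
def upTri {m : ℕ} {d : Fin m → ℕ} (a b : Idx d) : Prop :=
  a.1 < b.1 ∨ (a.1 = b.1 ∧ (a.2 : ℕ) ≤ (b.2 : ℕ))


lemma trace_transpose_mul_eq {p q : Type*} [Fintype p] [Fintype q] (X Y : Matrix p q ℝ) :
    Matrix.trace (Xᵀ * Y) = ∑ a, ∑ b, X a b * Y a b := by
  simp only [Matrix.trace, Matrix.diag, Matrix.mul_apply, Matrix.transpose_apply]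
  exact Finset.sum_comm

lemma key_frob_sq_le {n r : ℕ} (A B : Matrix (Fin n) (Fin r) ℝ)
    (hA : SemiOrth A) (hB : SemiOrth B) :
    ∑ a : Fin r, ∑ b : Fin r, ((Aᵀ * B) a b) ^ 2 ≤ (r : ℝ) := by
  have hA' : Aᵀ * A = 1 := hA
  have hB' : Bᵀ * B = 1 := hB
  set C := Aᵀ * B with hC
  set M := B - A * (Aᵀ * B) with hM
  have hMM : Mᵀ * M = 1 - Cᵀ * C := by
    simp only [hM, hC, Matrix.transpose_sub, Matrix.transpose_mul, Matrix.transpose_transpose,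
      Matrix.sub_mul, Matrix.mul_sub, ← Matrix.mul_assoc]
    rw [show Bᵀ * A * Aᵀ * A * Aᵀ * B = Bᵀ * A * (Aᵀ * A) * Aᵀ * B by
      simp [Matrix.mul_assoc], hA', hB']
    simp only [Matrix.mul_one, Matrix.one_mul]
    abel
  have h1 : ∑ a : Fin r, ∑ b : Fin r, (C a b) ^ 2 = Matrix.trace (Cᵀ * C) := by
    rw [trace_transpose_mul_eq]; simp [sq]
  have h2 : ∑ a : Fin n, ∑ b : Fin r, (M a b) ^ 2 = Matrix.trace (Mᵀ * M) := by
    rw [trace_transpose_mul_eq]; simp [sq]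
  have h3 : Matrix.trace (Mᵀ * M) = (r : ℝ) - Matrix.trace (Cᵀ * C) := by
    rw [hMM, Matrix.trace_sub, Matrix.trace_one]; simp
  have h4 : (0:ℝ) ≤ ∑ a : Fin n, ∑ b : Fin r, (M a b) ^ 2 :=
    Finset.sum_nonneg fun _ _ => Finset.sum_nonneg fun _ _ => sq_nonneg _
  rw [h1]; linarith [h2 ▸ h4, h3]

lemma term_le {n₁ n₂ r : ℕ} (A₁ B₁ : Matrix (Fin n₁) (Fin r) ℝ) (A₂ B₂ : Matrix (Fin n₂) (Fin r) ℝ)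
    (hA₁ : SemiOrth A₁) (hB₁ : SemiOrth B₁) (hA₂ : SemiOrth A₂) (hB₂ : SemiOrth B₂) :
    Matrix.trace (B₁ᵀ * (A₁ * A₂ᵀ) * B₂) ≤ (r : ℝ) := by
  have hassoc : B₁ᵀ * (A₁ * A₂ᵀ) * B₂ = (A₁ᵀ * B₁)ᵀ * (A₂ᵀ * B₂) := by
    simp [Matrix.transpose_mul, Matrix.mul_assoc]
  rw [hassoc, trace_transpose_mul_eq]
  set X := A₁ᵀ * B₁
  set Y := A₂ᵀ * B₂
  have hX : ∑ a : Fin r, ∑ b : Fin r, (X a b) ^ 2 ≤ (r : ℝ) := key_frob_sq_le _ _ hA₁ hB₁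
  have hY : ∑ a : Fin r, ∑ b : Fin r, (Y a b) ^ 2 ≤ (r : ℝ) := key_frob_sq_le _ _ hA₂ hB₂
  have hprod : ∑ a : Fin r, ∑ b : Fin r, X a b * Y a b
      = ∑ p : Fin r × Fin r, X p.1 p.2 * Y p.1 p.2 := by
    rw [Fintype.sum_prod_type]
  have hXp : ∑ p : Fin r × Fin r, (X p.1 p.2) ^ 2 ≤ (r : ℝ) := by
    rw [Fintype.sum_prod_type]; exact hX
  have hYp : ∑ p : Fin r × Fin r, (Y p.1 p.2) ^ 2 ≤ (r : ℝ) := by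
    rw [Fintype.sum_prod_type]; exact hY
  have hcs := Finset.sum_mul_sq_le_sq_mul_sq Finset.univ (fun p : Fin r × Fin r => X p.1 p.2)
    (fun p : Fin r × Fin r => Y p.1 p.2)
  have hXnn : (0:ℝ) ≤ ∑ p : Fin r × Fin r, (X p.1 p.2) ^ 2 :=
    Finset.sum_nonneg fun _ _ => sq_nonneg _
  have hYnn : (0:ℝ) ≤ ∑ p : Fin r × Fin r, (Y p.1 p.2) ^ 2 :=
    Finset.sum_nonneg fun _ _ => sq_nonneg _
  rw [hprod]
  nlinarith [hcs, hXp, hYp, hXnn, hYnn, Nat.cast_nonneg (α := ℝ) r]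

/-- In the noiseless MAXDIFF case (`S_ii = 0`, `S_ij = Θ_i Θ_jᵀ` for `i ≠ j`),
the point `(Θ_1, …, Θ_m)` globally solves the OTSM problem with value `m(m-1)r`. -/
theorem noiseless_maxdiff_global {m r : ℕ} (hm : 0 < m) (hr : 0 < r)
    {d : Fin m → ℕ} (hd : ∀ i, r ≤ d i)
    (Θ : ∀ i, Matrix (Fin (d i)) (Fin r) ℝ) (hΘ : ∀ i, SemiOrth (Θ i))
    (S : Matrix (Idx d) (Idx d) ℝ) (hSd : ∀ i, blk S i i = 0)
    (hSo : ∀ i j, i ≠ j → blk S i j = Θ i * (Θ j)ᵀ) :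
    (∀ O : ∀ i, Matrix (Fin (d i)) (Fin r) ℝ, (∀ i, SemiOrth (O i)) →
      objVal S O ≤ objVal S Θ) ∧ objVal S Θ = (m : ℝ) * ((m : ℝ) - 1) * r := by
  have hΘΘ : ∀ i j : Fin m, i ≠ j →
      Matrix.trace ((Θ i)ᵀ * blk S i j * Θ j) = (r : ℝ) := by
    intro i j hij
    rw [hSo i j hij]
    have : (Θ i)ᵀ * (Θ i * (Θ j)ᵀ) * Θ j = ((Θ i)ᵀ * Θ i) * ((Θ j)ᵀ * Θ j) := by
      simp [Matrix.mul_assoc]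
    rw [this, hΘ i, hΘ j, Matrix.one_mul, Matrix.trace_one]
    simp
  have hsum_ite : ∑ i : Fin m, ∑ j : Fin m, (if i = j then (0:ℝ) else (r:ℝ))
      = (m : ℝ) * ((m : ℝ) - 1) * r := by
    have hrow : ∀ i : Fin m, ∑ j : Fin m, (if i = j then (0:ℝ) else (r:ℝ))
        = (m : ℝ) * r - r := by
      intro i
      have : ∀ j : Fin m, (if i = j then (0:ℝ) else (r:ℝ))
          = (r : ℝ) - (if i = j then (r:ℝ) else 0) := by
        intro j; split <;> ring
      simp_rw [this, Finset.sum_sub_distrib, Finset.sum_const, Finset.sum_ite_eq,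
        Finset.mem_univ, if_pos, Finset.card_univ, Fintype.card_fin, nsmul_eq_mul]
    rw [Finset.sum_congr rfl fun i _ => hrow i, Finset.sum_const, Finset.card_univ,
      Fintype.card_fin, nsmul_eq_mul]
    ring
  have hΘval : objVal S Θ = (m : ℝ) * ((m : ℝ) - 1) * r := by
    rw [objVal, ← hsum_ite]
    refine Finset.sum_congr rfl fun i _ => Finset.sum_congr rfl fun j _ => ?_
    by_cases hij : i = j
    · subst hij; simp [hSd i]
    · simp [hij, hΘΘ i j hij]
  refine ⟨fun O hO => ?_, hΘval⟩
  rw [hΘval, objVal, ← hsum_ite]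
  refine Finset.sum_le_sum fun i _ => Finset.sum_le_sum fun j _ => ?_
  by_cases hij : i = j
  · subst hij; simp [hSd i]
  · simp only [hij, if_neg]
    rw [hSo i j hij]
    exact term_le (Θ i) (O i) (Θ j) (O j) (hΘ i) (hO i) (hΘ j) (hO j)

end
end

section
/- Let Ũ = ṼṼᵀ, with Ṽ ∈ ℝ^{D×r} whose blocks satisfy Ṽ_i ∈ O_{d_i,r}, be a solution of the rank-constrained problem. Suppose there exist c ∈ ℝ and symmetric matrices T⁽¹⁾, T⁽²⁾ ∈ ℝ^{D×D} with T⁽²⁾ block diagonal such that S = T⁽¹⁾ + T⁽²⁾ + c·I_D, T⁽¹⁾Ṽ = 0, Ṽ_iṼ_iᵀ T⁽²⁾_ii Ṽ_iṼ_iᵀ = T⁽²⁾_ii for all i, every matrix Ṽ_iᵀ T⁽²⁾_ii Ṽ_i is positive definite, and xᵀT⁽¹⁾x < 0 for every nonzero x ∈ ℝ^D with Ṽᵀx = 0. Then Ũ is the unique solution of the SDP relaxation: tr(SU) < tr(SŨ) for every SDP-feasible U ≠ Ũ. -/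
open Matrix BigOperators MeasureTheory ProbabilityTheory

noncomputable section

/-!
Write `S = T₁ + T₂ + c I`. Every feasible `U` has trace `m r`, so the term `c I` is constant.
Since `T₂` is block diagonal and each block is compressed by `Vᵢ Vᵢᵀ`,
`tr (T₂ U) = ∑ᵢ tr (Λᵢ Bᵢ)` with `Λᵢ = Vᵢᵀ T₂ᵢᵢ Vᵢ ≻ 0` and `Bᵢ = Vᵢᵀ Uᵢᵢ Vᵢ ⪯ I`, so it is at most
`∑ᵢ tr Λᵢ = tr (T₂ Ũ)`, with equality only if every `Bᵢ = I`. Strict negativity of `T₁` off the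
range of `V`, together with `T₁ V = 0`, makes `T₁ ⪯ 0` with kernel exactly the range of `V`; hence
`tr (T₁ U) ≤ 0 = tr (T₁ Ũ)`, with equality only if `T₁ U = 0`, i.e. `U = V M Vᵀ`. Then `Bᵢ = M`,
so equality throughout forces `M = I` and `U = Ũ`. Both equality cases rest on
`tr (A B) = ‖A^{1/2} B^{1/2}‖²` for positive semidefinite `A`, `B`.
-/

open scoped MatrixOrder ComplexOrder

namespace Matrix.PosSemidef

variable {n 𝕜 : Type*} [Fintype n] [DecidableEq n] [RCLike 𝕜] {A B : Matrix n n 𝕜}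

theorem trace_mul_eq_trace_conjTranspose_mul_self (hA : A.PosSemidef) (hB : B.PosSemidef) :
    (A * B).trace = ((CFC.sqrt A * CFC.sqrt B)ᴴ * (CFC.sqrt A * CFC.sqrt B)).trace := by
  have hsA : (CFC.sqrt A)ᴴ = CFC.sqrt A := (CFC.sqrt_nonneg A).isSelfAdjoint
  have hsB : (CFC.sqrt B)ᴴ = CFC.sqrt B := (CFC.sqrt_nonneg B).isSelfAdjoint
  rw [conjTranspose_mul, hsA, hsB, Matrix.mul_assoc, ← Matrix.mul_assoc (CFC.sqrt A),
    CFC.sqrt_mul_sqrt_self A hA.nonneg, trace_mul_comm (CFC.sqrt B), Matrix.mul_assoc,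
    CFC.sqrt_mul_sqrt_self B hB.nonneg]

theorem trace_mul_nonneg (hA : A.PosSemidef) (hB : B.PosSemidef) : 0 ≤ (A * B).trace := by
  rw [trace_mul_eq_trace_conjTranspose_mul_self hA hB]
  exact (posSemidef_conjTranspose_mul_self _).trace_nonneg

theorem mul_eq_zero_of_trace_mul_eq_zero (hA : A.PosSemidef) (hB : B.PosSemidef)
    (h : (A * B).trace = 0) : A * B = 0 := by
  rw [trace_mul_eq_trace_conjTranspose_mul_self hA hB,
    trace_conjTranspose_mul_self_eq_zero_iff] at h
  calc A * B = CFC.sqrt A * (CFC.sqrt A * CFC.sqrt B) * CFC.sqrt B := by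
        rw [Matrix.mul_assoc, Matrix.mul_assoc, CFC.sqrt_mul_sqrt_self B hB.nonneg,
          ← Matrix.mul_assoc, CFC.sqrt_mul_sqrt_self A hA.nonneg]
    _ = 0 := by rw [h, Matrix.mul_zero, Matrix.zero_mul]

end Matrix.PosSemidef

section Kernel

variable {ι κ : Type*} [Fintype ι] [Fintype κ] {T : Matrix ι ι ℝ} {V : Matrix ι κ ℝ} {a : ℝ}

theorem transpose_mulVec_sub_smul_mulVec [DecidableEq κ] (ha : a ≠ 0) (hVV : Vᵀ * V = a • 1)
    (x : ι → ℝ) :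
    Vᵀ *ᵥ (x - a⁻¹ • (V * Vᵀ) *ᵥ x) = 0 := by
  rw [mulVec_sub, mulVec_smul, mulVec_mulVec, ← Matrix.mul_assoc, hVV, Matrix.smul_mul,
    Matrix.one_mul, Matrix.smul_mulVec, smul_smul, inv_mul_cancel₀ ha, one_smul, sub_self]

theorem mulVec_sub_smul_mulVec (hTV : T * V = 0) (x : ι → ℝ) :
    T *ᵥ (x - a⁻¹ • (V * Vᵀ) *ᵥ x) = T *ᵥ x := by
  rw [mulVec_sub, mulVec_smul, mulVec_mulVec, ← Matrix.mul_assoc, hTV, Matrix.zero_mul,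
    zero_mulVec, smul_zero, sub_zero]

variable [DecidableEq κ] (ha : a ≠ 0) (hVV : Vᵀ * V = a • 1) (hTV : T * V = 0)
  (hneg : ∀ x : ι → ℝ, x ≠ 0 → Vᵀ *ᵥ x = 0 → x ⬝ᵥ T *ᵥ x < 0)
include ha hVV hTV hneg

theorem neg_posSemidef_of_neg_on_ker (hT : T.IsSymm) : (-T).PosSemidef := by
  refine .of_dotProduct_mulVec_nonneg (by simpa [IsHermitian] using hT.eq) fun x => ?_
  set y := x - a⁻¹ • (V * Vᵀ) *ᵥ x
  have hxy : x ⬝ᵥ T *ᵥ x = y ⬝ᵥ T *ᵥ y := by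
    rw [← mulVec_sub_smul_mulVec (a := a) hTV x, dotProduct_mulVec, ← mulVec_transpose, hT.eq,
      ← mulVec_sub_smul_mulVec (a := a) hTV x, dotProduct_comm]
  have hy : y ⬝ᵥ T *ᵥ y ≤ 0 := by
    rcases eq_or_ne y 0 with h | h
    · simp [h]
    · exact (hneg y h (transpose_mulVec_sub_smul_mulVec ha hVV x)).le
  simpa [neg_mulVec, hxy] using hy

theorem eq_smul_mul_of_mul_eq_zero {U : Matrix ι ι ℝ} (hTU : T * U = 0) :
    U = a⁻¹ • (V * Vᵀ * U) := by
  refine ext_iff_mulVec.mpr fun v => ?_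
  set x := U *ᵥ v
  have hy : T *ᵥ (x - a⁻¹ • (V * Vᵀ) *ᵥ x) = 0 := by
    rw [mulVec_sub_smul_mulVec hTV, mulVec_mulVec, hTU, zero_mulVec]
  by_contra hne
  have hy0 : x - a⁻¹ • (V * Vᵀ) *ᵥ x ≠ 0 := fun h => hne <| by
    rw [Matrix.smul_mulVec, ← mulVec_mulVec]
    exact sub_eq_zero.mp h
  simpa [hy] using hneg _ hy0 (transpose_mulVec_sub_smul_mulVec ha hVV x)

theorem eq_mul_mul_transpose_of_mul_eq_zero {U : Matrix ι ι ℝ} (hU : U.IsSymm) (hTU : T * U = 0) :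
    U = V * ((a⁻¹ * a⁻¹) • (Vᵀ * U * V)) * Vᵀ := by
  have hleft := eq_smul_mul_of_mul_eq_zero ha hVV hTV hneg hTU
  have hright : U = a⁻¹ • (U * (V * Vᵀ)) := by
    simpa [hU.eq, Matrix.mul_assoc] using congrArg transpose hleft
  rw [Matrix.mul_smul, Matrix.smul_mul]
  conv_lhs => rw [hright, hleft]
  rw [Matrix.smul_mul, smul_smul]
  simp only [Matrix.mul_assoc]

end Kernel

theorem trace_mul_eq_trace_compressions_mul {k l : Type*} [Fintype k] [Fintype l]
    {W : Matrix k l ℝ} {T : Matrix k k ℝ} (hT : W * Wᵀ * T * (W * Wᵀ) = T) (X : Matrix k k ℝ) :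
    (T * X).trace = ((Wᵀ * T * W) * (Wᵀ * X * W)).trace :=
  calc (T * X).trace = (W * ((Wᵀ * T * W) * (Wᵀ * X))).trace := by
        conv_lhs => rw [← hT]
        simp only [Matrix.mul_assoc]
    _ = _ := by rw [trace_mul_comm]; simp only [Matrix.mul_assoc]

theorem posSemidef_one_sub_transpose_mul_mul {k l : Type*} [Fintype k] [DecidableEq k]
    [Fintype l] [DecidableEq l] {W : Matrix k l ℝ} {X : Matrix k k ℝ} (hW : Wᵀ * W = 1)
    (hX : (1 - X).PosSemidef) : (1 - Wᵀ * X * W).PosSemidef := by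
  have := hX.conjTranspose_mul_mul_same W
  rwa [conjTranspose_eq_transpose_of_trivial, Matrix.mul_sub, Matrix.sub_mul, Matrix.mul_one,
    hW] at this

section Blocks

variable {m r : ℕ} {d : Fin m → ℕ}

theorem trace_eq_sum_trace_blk (A : Matrix (Idx d) (Idx d) ℝ) :
    A.trace = ∑ i, (blk A i i).trace := by
  rw [Matrix.trace, ← Finset.univ_sigma_univ, Finset.sum_sigma]
  rfl

theorem trace_mul_eq_sum_trace_blk (A B : Matrix (Idx d) (Idx d) ℝ) :
    (A * B).trace = ∑ i, ∑ j, (blk A i j * blk B j i).trace := by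
  simp only [trace, diag_apply, mul_apply, blk, of_apply, ← Finset.univ_sigma_univ,
    Finset.sum_sigma]
  refine Finset.sum_congr rfl fun i _ => ?_
  rw [Finset.sum_comm]

theorem trace_mul_eq_sum_trace_blk_of_blockDiagonal {T : Matrix (Idx d) (Idx d) ℝ}
    (hT : ∀ i j, i ≠ j → blk T i j = 0) (X : Matrix (Idx d) (Idx d) ℝ) :
    (T * X).trace = ∑ i, (blk T i i * blk X i i).trace := by
  rw [trace_mul_eq_sum_trace_blk]
  refine Finset.sum_congr rfl fun i _ => Finset.sum_eq_single_of_mem i (Finset.mem_univ i) ?_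
  intro j _ hji
  rw [hT i j hji.symm, Matrix.zero_mul, trace_zero]

theorem blk_mul_mul_transpose (V : Matrix (Idx d) (Fin r) ℝ) (M : Matrix (Fin r) (Fin r) ℝ)
    (i j : Fin m) : blk (V * M * Vᵀ) i j = rblk V i * M * (rblk V j)ᵀ := by
  ext a b
  simp [blk, rblk, mul_apply]

theorem transpose_mul_blk_mul_mul_transpose_mul {V : Matrix (Idx d) (Fin r) ℝ} {i : Fin m}
    (hVi : SemiOrth (rblk V i)) (M : Matrix (Fin r) (Fin r) ℝ) :
    (rblk V i)ᵀ * blk (V * M * Vᵀ) i i * rblk V i = M := by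
  have hVi' : (rblk V i)ᵀ * rblk V i = 1 := hVi
  rw [blk_mul_mul_transpose]
  simp only [← Matrix.mul_assoc]
  rw [hVi', Matrix.one_mul, Matrix.mul_assoc, hVi', Matrix.mul_one]

theorem transpose_mul_self_eq_smul_one {V : Matrix (Idx d) (Fin r) ℝ}
    (hV : ∀ i, SemiOrth (rblk V i)) : Vᵀ * V = (m : ℝ) • 1 := by
  have hblk : ∀ i, (rblk V i)ᵀ * rblk V i = 1 := hV
  ext c c'
  have hcol : ∀ i, ∑ a, V ⟨i, a⟩ c * V ⟨i, a⟩ c' = (1 : Matrix (Fin r) (Fin r) ℝ) c c' :=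
    fun i => by simpa [rblk, mul_apply] using congrFun (congrFun (hblk i) c) c'
  simp [mul_apply, ← Finset.univ_sigma_univ, Finset.sum_sigma, hcol]

theorem trace_blk_mul_transpose {V : Matrix (Idx d) (Fin r) ℝ} {i : Fin m}
    (hVi : SemiOrth (rblk V i)) : (blk (V * Vᵀ) i i).trace = r := by
  rw [show blk (V * Vᵀ) i i = rblk V i * (rblk V i)ᵀ by simpa using blk_mul_mul_transpose V 1 i i,
    trace_mul_comm, show (rblk V i)ᵀ * rblk V i = 1 from hVi, trace_one, Fintype.card_fin]

end Blocks

section Certificate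

variable {m r : ℕ} {d : Fin m → ℕ} {S T1 T2 : Matrix (Idx d) (Idx d) ℝ}
  {V : Matrix (Idx d) (Fin r) ℝ} {c : ℝ}

theorem trace_mul_eq_of_certificate (hT2bd : ∀ i j, i ≠ j → blk T2 i j = 0)
    (hdecomp : S = T1 + T2 + c • 1)
    (hproj : ∀ i, rblk V i * (rblk V i)ᵀ * blk T2 i i * (rblk V i * (rblk V i)ᵀ) = blk T2 i i)
    (X : Matrix (Idx d) (Idx d) ℝ) :
    (S * X).trace = (T1 * X).trace + ∑ i, ((rblk V i)ᵀ * blk T2 i i * rblk V i *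
      ((rblk V i)ᵀ * blk X i i * rblk V i)).trace + c * X.trace := by
  rw [hdecomp, Matrix.add_mul, Matrix.add_mul, trace_add, trace_add, Matrix.smul_mul,
    Matrix.one_mul, trace_smul, smul_eq_mul, trace_mul_eq_sum_trace_blk_of_blockDiagonal hT2bd]
  congr 2
  exact Finset.sum_congr rfl fun i _ => trace_mul_eq_trace_compressions_mul (hproj i) _

theorem trace_mul_sub_trace_mul_of_certificate (hV : ∀ i, SemiOrth (rblk V i))
    (hT2bd : ∀ i j, i ≠ j → blk T2 i j = 0) (hdecomp : S = T1 + T2 + c • 1) (hT1V : T1 * V = 0)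
    (hproj : ∀ i, rblk V i * (rblk V i)ᵀ * blk T2 i i * (rblk V i * (rblk V i)ᵀ) = blk T2 i i)
    {U : Matrix (Idx d) (Idx d) ℝ} (hU : ∀ i, (blk U i i).trace = r) :
    (S * (V * Vᵀ)).trace - (S * U).trace = ((-T1) * U).trace + ∑ i, ((rblk V i)ᵀ * blk T2 i i *
      rblk V i * (1 - (rblk V i)ᵀ * blk U i i * rblk V i)).trace := by
  have hcompress : ∀ i, (rblk V i)ᵀ * blk (V * Vᵀ) i i * rblk V i = 1 := fun i => by
    simpa using transpose_mul_blk_mul_mul_transpose_mul (hV i) 1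
  have htrace : U.trace = (V * Vᵀ).trace := by
    rw [trace_eq_sum_trace_blk, trace_eq_sum_trace_blk]
    exact Finset.sum_congr rfl fun i _ => (hU i).trans (trace_blk_mul_transpose (hV i)).symm
  rw [trace_mul_eq_of_certificate hT2bd hdecomp hproj, trace_mul_eq_of_certificate hT2bd hdecomp
    hproj, htrace, ← Matrix.mul_assoc, hT1V, Matrix.zero_mul]
  simp only [hcompress, Matrix.mul_one, Matrix.mul_sub, trace_sub, Finset.sum_sub_distrib,
    Matrix.neg_mul, trace_neg, trace_zero]
  ring

end Certificate

theorem certificate_unique_sdp_solution_general {m r : ℕ} (hm : 0 < m)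
    {d : Fin m → ℕ}
    (S : Matrix (Idx d) (Idx d) ℝ)
    (V : Matrix (Idx d) (Fin r) ℝ) (hV : ∀ i, SemiOrth (rblk V i))
    (c : ℝ) (T1 T2 : Matrix (Idx d) (Idx d) ℝ)
    (hT1s : T1.IsSymm)
    (hT2bd : ∀ i j, i ≠ j → blk T2 i j = 0)
    (hdecomp : S = T1 + T2 + c • 1)
    (hT1V : T1 * V = 0)
    (hproj : ∀ i, rblk V i * (rblk V i)ᵀ * blk T2 i i * (rblk V i * (rblk V i)ᵀ) = blk T2 i i)
    (hpd : ∀ i, ((rblk V i)ᵀ * blk T2 i i * rblk V i).PosDef)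
    (hneg : ∀ x : Idx d → ℝ, x ≠ 0 → Vᵀ.mulVec x = 0 → x ⬝ᵥ T1.mulVec x < 0) :
    ∀ U : Matrix (Idx d) (Idx d) ℝ, SDPFeasible r U → U ≠ V * Vᵀ →
      Matrix.trace (S * U) < Matrix.trace (S * (V * Vᵀ)) := by
  intro U hU hne
  have hm' : (m : ℝ) ≠ 0 := by positivity
  have hVV := transpose_mul_self_eq_smul_one hV
  have hT1 : (-T1).PosSemidef := neg_posSemidef_of_neg_on_ker hm' hVV hT1V hneg hT1s
  set Λ : ∀ i, Matrix (Fin r) (Fin r) ℝ := fun i => (rblk V i)ᵀ * blk T2 i i * rblk V i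
  set B : ∀ i, Matrix (Fin r) (Fin r) ℝ := fun i => (rblk V i)ᵀ * blk U i i * rblk V i
  have hB : ∀ i, (1 - B i).PosSemidef :=
    fun i => posSemidef_one_sub_transpose_mul_mul (hV i) (hU.2.1 i)
  have hgap := trace_mul_sub_trace_mul_of_certificate hV hT2bd hdecomp hT1V hproj hU.2.2
  have hterm : ∀ i, 0 ≤ (Λ i * (1 - B i)).trace :=
    fun i => (hpd i).posSemidef.trace_mul_nonneg (hB i)
  have hsum := Finset.sum_nonneg fun i (_ : i ∈ Finset.univ) => hterm i
  have hT1U := hT1.trace_mul_nonneg hU.1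
  refine lt_of_le_of_ne (by linarith) fun heq => hne ?_
  have hT1U0 : T1 * U = 0 := by
    simpa using hT1.mul_eq_zero_of_trace_mul_eq_zero hU.1 (by linarith)
  have hB1 : ∀ i, B i = 1 := fun i => by
    have htr := (Finset.sum_eq_zero_iff_of_nonneg fun i _ => hterm i).mp (by linarith) i
      (Finset.mem_univ i)
    have := (hpd i).posSemidef.mul_eq_zero_of_trace_mul_eq_zero (hB i) htr
    exact (sub_eq_zero.mp ((hpd i).isUnit.mul_right_eq_zero.mp this)).symm
  obtain ⟨M, hUM⟩ : ∃ M, U = V * M * Vᵀ := ⟨_, eq_mul_mul_transpose_of_mul_eq_zero hm' hVV hT1V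
    hneg (by simpa [IsSymm] using hU.1.isHermitian.eq) hT1U0⟩
  have hM : M = 1 := by
    rw [← transpose_mul_blk_mul_mul_transpose_mul (hV ⟨0, hm⟩) M, ← hUM]
    exact hB1 ⟨0, hm⟩
  rw [hUM, hM, Matrix.mul_one]

/-- Lemma 4.1: certificate condition for the equivalence between the
rank-constrained problem and its SDP relaxation. -/
theorem certificate_unique_sdp_solution {m r : ℕ} (hm : 0 < m) (hr : 0 < r)
    {d : Fin m → ℕ} (hd : ∀ i, r ≤ d i)
    (S : Matrix (Idx d) (Idx d) ℝ) (hSsymm : S.IsSymm)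
    (V : Matrix (Idx d) (Fin r) ℝ) (hV : ∀ i, SemiOrth (rblk V i))
    (hsol : IsRankSol r S (V * Vᵀ))
    (c : ℝ) (T1 T2 : Matrix (Idx d) (Idx d) ℝ)
    (hT1s : T1.IsSymm) (hT2s : T2.IsSymm)
    (hT2bd : ∀ i j, i ≠ j → blk T2 i j = 0)
    (hdecomp : S = T1 + T2 + c • 1)
    (hT1V : T1 * V = 0)
    (hproj : ∀ i, rblk V i * (rblk V i)ᵀ * blk T2 i i * (rblk V i * (rblk V i)ᵀ) = blk T2 i i)
    (hpd : ∀ i, ((rblk V i)ᵀ * blk T2 i i * rblk V i).PosDef)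
    (hneg : ∀ x : Idx d → ℝ, x ≠ 0 → Vᵀ.mulVec x = 0 → x ⬝ᵥ T1.mulVec x < 0) :
    ∀ U : Matrix (Idx d) (Idx d) ℝ, SDPFeasible r U → U ≠ V * Vᵀ →
      Matrix.trace (S * U) < Matrix.trace (S * (V * Vᵀ)) :=
  certificate_unique_sdp_solution_general hm S V hV c T1 T2 hT1s hT2bd hdecomp hT1V hproj hpd hneg
end
end

section
/- Let Ũ = ṼṼᵀ, with Ṽ ∈ ℝ^{D×r} and blocks Ṽ_i ∈ O_{d_i,r}, be a solution of the rank-constrained problem. Define the block-diagonal matrix S⁽²⁾ ∈ ℝ^{D×D} with diagonal blocks S⁽²⁾_ii = (Σ_{j=1}^m S_ijṼ_j)Ṽ_iᵀ, and set S⁽¹⁾ = S − S⁽²⁾. Then S⁽¹⁾Ṽ = 0 and ṼᵀS⁽¹⁾ = 0 (equivalently Π_{Ṽ⊥}S⁽¹⁾Π_{Ṽ⊥} = S⁽¹⁾), and Ṽ_iṼ_iᵀ S⁽²⁾_ii Ṽ_iṼ_iᵀ = S⁽²⁾_ii for all 1 ≤ i ≤ m. -/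
open Matrix BigOperators MeasureTheory ProbabilityTheory

noncomputable section

section SDHelper

variable {m r : ℕ} {d : Fin m → ℕ}

private lemma sd_sum_idx (F : Idx d → ℝ) :
    ∑ q : Idx d, F q = ∑ i, ∑ a, F ⟨i, a⟩ := by
  rw [← Finset.univ_sigma_univ, Finset.sum_sigma]

private lemma sd_blocksum (i : Fin m) (F : Idx d → ℝ) (hF : ∀ q : Idx d, q.1 ≠ i → F q = 0) :
    ∑ q : Idx d, F q = ∑ a, F ⟨i, a⟩ := by
  rw [sd_sum_idx]
  exact Finset.sum_eq_single i (fun j _ hj => Finset.sum_eq_zero fun a _ => hF ⟨j, a⟩ hj)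
    (fun h => absurd (Finset.mem_univ i) h)

private lemma sd_entries {n : ℕ} {O : Matrix (Fin n) (Fin r) ℝ} (hO : SemiOrth O) (c c' : Fin r) :
    ∑ x, O x c * O x c' = if c = c' then (1:ℝ) else 0 := by
  have h : Oᵀ * O = 1 := hO
  have h2 := congrFun (congrFun h c) c'
  simpa [Matrix.mul_apply, Matrix.one_apply] using h2

private lemma sd_blk_mulT (V : Matrix (Idx d) (Fin r) ℝ) (i j : Fin m) :
    blk (V * Vᵀ) i j = rblk V i * (rblk V j)ᵀ := by
  ext a b
  simp [blk, rblk, Matrix.mul_apply]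

private lemma sd_rblk_mul (X : Matrix (Idx d) (Idx d) ℝ) (Y : Matrix (Idx d) (Fin r) ℝ) (i : Fin m) :
    rblk (X * Y) i = ∑ j, blk X i j * rblk Y j := by
  ext a c
  show (X * Y) ⟨i, a⟩ c = _
  rw [Matrix.mul_apply, sd_sum_idx (fun q => X ⟨i, a⟩ q * Y q c), Matrix.sum_apply]
  exact Finset.sum_congr rfl fun j _ => by rw [Matrix.mul_apply]; rfl

private lemma sd_zero_of_rblk {M : Matrix (Idx d) (Fin r) ℝ} (h : ∀ i, rblk M i = 0) : M = 0 := by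
  ext ⟨i, a⟩ c
  have := congrFun (congrFun (h i) a) c
  simpa [rblk] using this

private lemma sd_dot2 {n : ℕ} {O : Matrix (Fin n) (Fin r) ℝ} (hO : SemiOrth O)
    (α β γ δ : ℝ) (c1 c2 c3 c4 : Fin r) :
    ∑ x, (α * O x c1 + β * O x c2) * (γ * O x c3 + δ * O x c4) =
      α*γ*(if c1 = c3 then (1:ℝ) else 0) + α*δ*(if c1 = c4 then (1:ℝ) else 0)
      + β*γ*(if c2 = c3 then (1:ℝ) else 0) + β*δ*(if c2 = c4 then (1:ℝ) else 0) := by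
  have hexp : ∀ x ∈ Finset.univ (α := Fin n),
      (α * O x c1 + β * O x c2) * (γ * O x c3 + δ * O x c4)
      = α*γ*(O x c1 * O x c3) + α*δ*(O x c1 * O x c4)
        + β*γ*(O x c2 * O x c3) + β*δ*(O x c2 * O x c4) := fun x _ => by ring
  rw [Finset.sum_congr rfl hexp]
  rw [Finset.sum_add_distrib, Finset.sum_add_distrib, Finset.sum_add_distrib,
    ← Finset.mul_sum, ← Finset.mul_sum, ← Finset.mul_sum, ← Finset.mul_sum,
    sd_entries hO c1 c3, sd_entries hO c1 c4, sd_entries hO c2 c3, sd_entries hO c2 c4]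

private lemma sd_dot2w {n : ℕ} {O : Matrix (Fin n) (Fin r) ℝ} (hO : SemiOrth O)
    {w : Fin n → ℝ} (hw : ∀ c, ∑ x, O x c * w x = 0) (hw1 : ∑ x, w x * w x = 1)
    (α β γ δ : ℝ) (c1 c2 : Fin r) :
    ∑ x, (α * O x c1 + β * w x) * (γ * O x c2 + δ * w x) =
      α*γ*(if c1 = c2 then (1:ℝ) else 0) + β*δ := by
  have hexp : ∀ x ∈ Finset.univ (α := Fin n),
      (α * O x c1 + β * w x) * (γ * O x c2 + δ * w x)
      = α*γ*(O x c1 * O x c2) + α*δ*(O x c1 * w x) + β*γ*(O x c2 * w x) + β*δ*(w x * w x) :=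
    fun x _ => by ring
  rw [Finset.sum_congr rfl hexp]
  rw [Finset.sum_add_distrib, Finset.sum_add_distrib, Finset.sum_add_distrib,
    ← Finset.mul_sum, ← Finset.mul_sum, ← Finset.mul_sum, ← Finset.mul_sum,
    sd_entries hO c1 c2, hw c1, hw c2, hw1]
  ring

private lemma sd_pert1 {n : ℕ} {O : Matrix (Fin n) (Fin r) ℝ} (hO : SemiOrth O) (k : Fin r)
    (w : Fin n → ℝ) (hw : ∀ c, ∑ x, O x c * w x = 0) (hw1 : ∑ x, w x * w x = 1)
    (a b : ℝ) (hab : a ^ 2 + b ^ 2 = 1) :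
    SemiOrth (Matrix.of fun x c => if c = k then a * O x k + b * w x else O x c) := by
  show _ * _ = _
  ext c c'
  rw [Matrix.mul_apply]
  simp only [Matrix.transpose_apply, Matrix.of_apply, Matrix.one_apply]
  by_cases hc : c = k <;> by_cases hc' : c' = k
  · simp only [if_pos hc, if_pos hc']
    rw [sd_dot2w hO hw hw1 a b a b k k, if_pos rfl, if_pos (hc.trans hc'.symm)]
    linear_combination hab
  · simp only [if_pos hc, if_neg hc']
    have e : ∀ x ∈ Finset.univ (α := Fin n),
        (a * O x k + b * w x) * O x c' = (a * O x k + b * w x) * ((1:ℝ) * O x c' + 0 * w x) :=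
      fun x _ => by ring
    rw [Finset.sum_congr rfl e, sd_dot2w hO hw hw1 a b 1 0 k c',
      if_neg (fun h : k = c' => hc' h.symm),
      if_neg (fun h : c = c' => hc' (h.symm.trans hc))]
    ring
  · simp only [if_pos hc', if_neg hc]
    have e : ∀ x ∈ Finset.univ (α := Fin n),
        O x c * (a * O x k + b * w x) = ((1:ℝ) * O x c + 0 * w x) * (a * O x k + b * w x) :=
      fun x _ => by ring
    rw [Finset.sum_congr rfl e, sd_dot2w hO hw hw1 1 0 a b c k, if_neg hc,
      if_neg (fun h : c = c' => hc (h.trans hc'))]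
    ring
  · simp only [if_neg hc, if_neg hc']
    exact sd_entries hO c c'

private lemma sd_rot {n : ℕ} {O : Matrix (Fin n) (Fin r) ℝ} (hO : SemiOrth O) (k l : Fin r)
    (hkl : k ≠ l) (a b : ℝ) (hab : a ^ 2 + b ^ 2 = 1) :
    SemiOrth (Matrix.of fun x c =>
      if c = k then a * O x k + b * O x l
      else if c = l then a * O x l - b * O x k else O x c) := by
  have hlk : l ≠ k := hkl.symm
  show _ * _ = _
  ext c c'
  rw [Matrix.mul_apply]
  simp only [Matrix.transpose_apply, Matrix.of_apply, Matrix.one_apply]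
  by_cases hck : c = k
  · by_cases hc'k : c' = k
    · simp only [if_pos hck, if_pos hc'k]
      rw [sd_dot2 hO a b a b k l k l, if_pos rfl, if_pos rfl, if_neg hkl, if_neg hlk,
        if_pos (hck.trans hc'k.symm)]
      linear_combination hab
    · by_cases hc'l : c' = l
      · simp only [if_pos hck, if_neg hc'k, if_pos hc'l]
        have e : ∀ x ∈ Finset.univ (α := Fin n),
            (a * O x k + b * O x l) * (a * O x l - b * O x k)
            = (a * O x k + b * O x l) * (a * O x l + (-b) * O x k) := fun x _ => by ring
        rw [Finset.sum_congr rfl e, sd_dot2 hO a b a (-b) k l l k, if_pos rfl, if_pos rfl,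
          if_neg hkl, if_neg hlk, if_neg (fun h : c = c' => hkl (hck.symm.trans (h.trans hc'l)))]
        ring
      · simp only [if_pos hck, if_neg hc'k, if_neg hc'l]
        have e : ∀ x ∈ Finset.univ (α := Fin n),
            (a * O x k + b * O x l) * O x c'
            = (a * O x k + b * O x l) * ((1:ℝ) * O x c' + 0 * O x c') := fun x _ => by ring
        rw [Finset.sum_congr rfl e, sd_dot2 hO a b 1 0 k l c' c',
          if_neg (fun h : k = c' => hc'k h.symm), if_neg (fun h : l = c' => hc'l h.symm),
          if_neg (fun h : c = c' => hc'k (h.symm.trans hck))]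
        ring
  · by_cases hcl : c = l
    · by_cases hc'k : c' = k
      · simp only [if_pos hcl, if_neg hck, if_pos hc'k]
        have e : ∀ x ∈ Finset.univ (α := Fin n),
            (a * O x l - b * O x k) * (a * O x k + b * O x l)
            = (a * O x l + (-b) * O x k) * (a * O x k + b * O x l) := fun x _ => by ring
        rw [Finset.sum_congr rfl e, sd_dot2 hO a (-b) a b l k k l, if_pos rfl, if_pos rfl,
          if_neg hkl, if_neg hlk, if_neg (fun h : c = c' => hlk (hcl.symm.trans (h.trans hc'k)))]
        ring
      · by_cases hc'l : c' = l
        · simp only [if_pos hcl, if_neg hck, if_neg hc'k, if_pos hc'l]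
          have e : ∀ x ∈ Finset.univ (α := Fin n),
              (a * O x l - b * O x k) * (a * O x l - b * O x k)
              = (a * O x l + (-b) * O x k) * (a * O x l + (-b) * O x k) := fun x _ => by ring
          rw [Finset.sum_congr rfl e, sd_dot2 hO a (-b) a (-b) l k l k, if_pos rfl, if_pos rfl,
            if_neg hkl, if_neg hlk, if_pos (hcl.trans hc'l.symm)]
          linear_combination hab
        · simp only [if_pos hcl, if_neg hck, if_neg hc'k, if_neg hc'l]
          have e : ∀ x ∈ Finset.univ (α := Fin n),
              (a * O x l - b * O x k) * O x c'
              = (a * O x l + (-b) * O x k) * ((1:ℝ) * O x c' + 0 * O x c') := fun x _ => by ring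
          rw [Finset.sum_congr rfl e, sd_dot2 hO a (-b) 1 0 l k c' c',
            if_neg (fun h : l = c' => hc'l h.symm), if_neg (fun h : k = c' => hc'k h.symm),
            if_neg (fun h : c = c' => hc'l (h.symm.trans hcl))]
          ring
    · by_cases hc'k : c' = k
      · simp only [if_pos hc'k, if_neg hck, if_neg hcl]
        have e : ∀ x ∈ Finset.univ (α := Fin n),
            O x c * (a * O x k + b * O x l)
            = ((1:ℝ) * O x c + 0 * O x c) * (a * O x k + b * O x l) := fun x _ => by ring
        rw [Finset.sum_congr rfl e, sd_dot2 hO 1 0 a b c c k l, if_neg hck, if_neg hcl, if_neg (fun h : c = c' => hck (h.trans hc'k))]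
        ring
      · by_cases hc'l : c' = l
        · simp only [if_pos hc'l, if_neg hck, if_neg hcl, if_neg hc'k]
          have e : ∀ x ∈ Finset.univ (α := Fin n),
              O x c * (a * O x l - b * O x k)
              = ((1:ℝ) * O x c + 0 * O x c) * (a * O x l + (-b) * O x k) := fun x _ => by ring
          rw [Finset.sum_congr rfl e, sd_dot2 hO 1 0 a (-b) c c l k, if_neg hcl, if_neg hck, if_neg (fun h : c = c' => hcl (h.trans hc'l))]
          ring
        · simp only [if_neg hck, if_neg hcl, if_neg hc'k, if_neg hc'l]
          exact sd_entries hO c c'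


private lemma sd_VtV {V : Matrix (Idx d) (Fin r) ℝ} (hV : ∀ i, SemiOrth (rblk V i)) :
    Vᵀ * V = (m : ℝ) • (1 : Matrix (Fin r) (Fin r) ℝ) := by
  ext c c'
  rw [Matrix.mul_apply]
  simp only [Matrix.transpose_apply]
  rw [sd_sum_idx (fun q => V q c * V q c')]
  have he : ∀ i : Fin m, (∑ a, V ⟨i, a⟩ c * V ⟨i, a⟩ c') = if c = c' then (1:ℝ) else 0 :=
    fun i => sd_entries (hV i) c c'
  rw [Finset.sum_congr rfl fun i _ => he i]
  simp only [Finset.sum_const, Finset.card_univ, Fintype.card_fin, nsmul_eq_mul,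
    Matrix.smul_apply, Matrix.one_apply, smul_eq_mul]

private lemma sd_feas (hm : 0 < m) (V : Matrix (Idx d) (Fin r) ℝ)
    (hV : ∀ i, SemiOrth (rblk V i)) : RankFeasible r (V * Vᵀ) := by
  have hconj : Vᴴ = Vᵀ := by ext p c; simp [Matrix.conjTranspose_apply]
  refine ⟨⟨?_, ?_, ?_⟩, ?_⟩
  · rw [← hconj]; exact Matrix.posSemidef_self_mul_conjTranspose V
  · intro i
    rw [sd_blk_mulT]
    have hOO : (rblk V i)ᵀ * rblk V i = 1 := hV i
    have hPP : (rblk V i * (rblk V i)ᵀ) * (rblk V i * (rblk V i)ᵀ) = rblk V i * (rblk V i)ᵀ := by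
      rw [Matrix.mul_assoc, ← Matrix.mul_assoc (rblk V i)ᵀ, hOO, Matrix.one_mul]
    have hconj2 : ((1 : Matrix (Fin (d i)) (Fin (d i)) ℝ) - rblk V i * (rblk V i)ᵀ)ᴴ
        = 1 - rblk V i * (rblk V i)ᵀ := by
      have ht : (rblk V i * (rblk V i)ᵀ)ᵀ = rblk V i * (rblk V i)ᵀ := by
        rw [Matrix.transpose_mul, Matrix.transpose_transpose]
      have hc : ((1 : Matrix (Fin (d i)) (Fin (d i)) ℝ) - rblk V i * (rblk V i)ᵀ)ᴴ
          = ((1 : Matrix (Fin (d i)) (Fin (d i)) ℝ) - rblk V i * (rblk V i)ᵀ)ᵀ := by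
        ext a b; simp [Matrix.conjTranspose_apply]
      rw [hc, Matrix.transpose_sub, Matrix.transpose_one, ht]
    have hP : ((1 : Matrix (Fin (d i)) (Fin (d i)) ℝ) - rblk V i * (rblk V i)ᵀ)
        = (1 - rblk V i * (rblk V i)ᵀ)ᴴ * (1 - rblk V i * (rblk V i)ᵀ) := by
      rw [hconj2, Matrix.sub_mul, Matrix.one_mul, Matrix.mul_sub, Matrix.mul_one, hPP,
        sub_self, sub_zero]
    rw [hP]
    exact Matrix.posSemidef_conjTranspose_mul_self _
  · intro i
    have hOO : (rblk V i)ᵀ * rblk V i = 1 := hV i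
    rw [sd_blk_mulT, Matrix.trace_mul_comm, hOO, Matrix.trace_one]
    simp
  · have hu : IsUnit ((m:ℝ) • (1 : Matrix (Fin r) (Fin r) ℝ)) := by
      rw [Matrix.isUnit_iff_isUnit_det, Matrix.det_smul, Matrix.det_one, mul_one]
      exact (pow_ne_zero _ (Nat.cast_ne_zero.2 hm.ne')).isUnit
    have h1 : (Vᵀ * V).rank = r := by
      rw [sd_VtV hV, Matrix.rank_of_isUnit _ hu, Fintype.card_fin]
    have h2 : V.rank ≤ r := (Matrix.rank_le_card_width V).trans (Fintype.card_fin r).le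
    have h3 : r ≤ V.rank := by
      have := Matrix.rank_mul_le_right Vᵀ V
      rwa [h1] at this
    rw [Matrix.rank_self_mul_transpose]
    omega

private lemma sd_trace_col (S : Matrix (Idx d) (Idx d) ℝ) (hSsymm : S.IsSymm)
    (V : Matrix (Idx d) (Fin r) ℝ) (x : Idx d → ℝ) (k : Fin r) :
    Matrix.trace (S * ((Matrix.of fun q c => if c = k then x q else 0) * Vᵀ))
      = ∑ q, x q * (S * V) q k := by
  have hs' : ∀ p q, S p q = S q p := fun p q => congrFun (congrFun hSsymm.eq q) p
  rw [Matrix.trace]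
  simp only [Matrix.diag_apply, Matrix.mul_apply, Matrix.transpose_apply, Matrix.of_apply]
  simp only [ite_mul, zero_mul, Finset.sum_ite_eq', Finset.mem_univ, if_true]
  rw [Finset.sum_comm]
  refine Finset.sum_congr rfl fun q _ => ?_
  rw [Finset.mul_sum]
  refine Finset.sum_congr rfl fun p _ => ?_
  rw [hs' p q]
  ring

private lemma sd_master (hm : 0 < m) (S : Matrix (Idx d) (Idx d) ℝ) (hSsymm : S.IsSymm)
    (V : Matrix (Idx d) (Fin r) ℝ) (hsol : IsRankSol r S (V * Vᵀ))
    (A B : Matrix (Idx d) (Fin r) ℝ)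
    (hfeas : ∀ t : ℝ, ∀ i, SemiOrth (rblk (V + (Real.cos t - 1) • A + Real.sin t • B) i)) :
    Matrix.trace (S * (B * Vᵀ)) = 0 := by
  have tsymm : ∀ X Y : Matrix (Idx d) (Fin r) ℝ,
      Matrix.trace (S * (X * Yᵀ)) = Matrix.trace (S * (Y * Xᵀ)) := by
    intro X Y
    calc Matrix.trace (S * (X * Yᵀ)) = Matrix.trace ((S * (X * Yᵀ))ᵀ) :=
          (Matrix.trace_transpose _).symm
      _ = Matrix.trace (Y * Xᵀ * Sᵀ) := by
          rw [Matrix.transpose_mul, Matrix.transpose_mul, Matrix.transpose_transpose]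
      _ = Matrix.trace (Y * Xᵀ * S) := by rw [hSsymm.eq]
      _ = Matrix.trace (S * (Y * Xᵀ)) := by rw [Matrix.trace_mul_cycle, Matrix.mul_assoc]
  have expand : ∀ α β : ℝ,
      Matrix.trace (S * ((V + α • A + β • B) * (V + α • A + β • B)ᵀ)) =
        Matrix.trace (S * (V * Vᵀ)) + (2*(α))*Matrix.trace (S * (A * Vᵀ))
        + (2*(β))*Matrix.trace (S * (B * Vᵀ)) + ((α)^2)*Matrix.trace (S * (A * Aᵀ))
        + ((α)*(β))*(2 * Matrix.trace (S * (A * Bᵀ))) + ((β)^2)*Matrix.trace (S * (B * Bᵀ)) := by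
    intro α β
    simp only [Matrix.transpose_add, Matrix.transpose_smul, Matrix.mul_add, Matrix.add_mul,
      Matrix.smul_mul, Matrix.mul_smul, mul_add, add_mul, smul_mul_assoc, mul_smul_comm,
      smul_smul, Matrix.trace_add, Matrix.trace_smul, smul_eq_mul]
    rw [tsymm V A, tsymm V B, tsymm B A]
    ring
  have hloc : IsLocalMax (fun t : ℝ => Matrix.trace (S * (V * Vᵀ))
      + (2*(Real.cos t - 1))*Matrix.trace (S * (A * Vᵀ))
      + (2*(Real.sin t))*Matrix.trace (S * (B * Vᵀ))
      + ((Real.cos t - 1)^2)*Matrix.trace (S * (A * Aᵀ))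
      + ((Real.cos t - 1)*(Real.sin t))*(2 * Matrix.trace (S * (A * Bᵀ)))
      + ((Real.sin t)^2)*Matrix.trace (S * (B * Bᵀ))) 0 := by
    apply Filter.Eventually.of_forall
    intro t
    have h1 := (expand (Real.cos t - 1) (Real.sin t)).symm
    have h2 := (expand (Real.cos 0 - 1) (Real.sin 0)).symm
    dsimp only
    rw [h1, h2]
    have hW := sd_feas hm _ (hfeas t)
    have hle := hsol.2 _ hW
    have h0 : V + (Real.cos 0 - 1) • A + Real.sin 0 • B = V := by
      simp [Real.cos_zero, Real.sin_zero]
    rw [h0]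
    exact hle
  have hc : HasDerivAt (fun t : ℝ => Real.cos t - 1) (-Real.sin 0) 0 :=
    (Real.hasDerivAt_cos 0).sub_const 1
  have hsn : HasDerivAt Real.sin (Real.cos 0) 0 := Real.hasDerivAt_sin 0
  have hder := (((((hasDerivAt_const (0:ℝ) (Matrix.trace (S * (V * Vᵀ)))).add
    ((hc.const_mul (2:ℝ)).mul_const (Matrix.trace (S * (A * Vᵀ))))).add
    ((hsn.const_mul (2:ℝ)).mul_const (Matrix.trace (S * (B * Vᵀ))))).add
    ((hc.pow 2).mul_const (Matrix.trace (S * (A * Aᵀ))))).add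
    ((hc.mul hsn).mul_const (2 * Matrix.trace (S * (A * Bᵀ))))).add
    ((hsn.pow 2).mul_const (Matrix.trace (S * (B * Bᵀ))))
  have hkey := hloc.hasDerivAt_eq_zero hder
  norm_num at hkey
  linarith [hkey]


private lemma sd_blk_transpose (X : Matrix (Idx d) (Idx d) ℝ) (i j : Fin m) :
    blk Xᵀ i j = (blk X j i)ᵀ := rfl

private lemma sd_rblk_sub (X Y : Matrix (Idx d) (Fin r) ℝ) (i : Fin m) :
    rblk (X - Y) i = rblk X i - rblk Y i := rfl

private lemma sd_orth (hm : 0 < m) (S : Matrix (Idx d) (Idx d) ℝ) (hSsymm : S.IsSymm)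
    (V : Matrix (Idx d) (Fin r) ℝ) (hV : ∀ i, SemiOrth (rblk V i))
    (hsol : IsRankSol r S (V * Vᵀ)) (i : Fin m) (k : Fin r) (w : Idx d → ℝ)
    (hsupp : ∀ q : Idx d, q.1 ≠ i → w q = 0)
    (horth : ∀ c, ∑ q, V q c * w q = 0) :
    ∑ q, w q * (S * V) q k = 0 := by
  by_cases hw0 : ∀ q, w q = 0
  · simp [hw0]
  · have hs0 : 0 < ∑ q, w q * w q := by
      rcases not_forall.mp hw0 with ⟨q0, hq0⟩
      exact Finset.sum_pos' (fun x _ => mul_self_nonneg _)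
        ⟨q0, Finset.mem_univ q0, mul_self_pos.mpr hq0⟩
    set cc : ℝ := (Real.sqrt (∑ q, w q * w q))⁻¹ with hccdef
    have hccpos : 0 < cc := inv_pos.2 (Real.sqrt_pos.2 hs0)
    have hcs : cc ^ 2 * (∑ q, w q * w q) = 1 := by
      rw [hccdef, inv_pow, Real.sq_sqrt hs0.le]
      exact inv_mul_cancel₀ hs0.ne'
    have hfeas : ∀ t : ℝ, ∀ j, SemiOrth (rblk
        (V + (Real.cos t - 1) • (Matrix.of fun q c' => if q.1 = i ∧ c' = k then V q k else 0)
           + Real.sin t • (Matrix.of fun q c' => if c' = k then cc * w q else 0)) j) := by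
      intro t j
      by_cases hj : j = i
      · subst hj
        have hform : rblk (V + (Real.cos t - 1) •
              (Matrix.of fun q c' => if q.1 = j ∧ c' = k then V q k else 0)
              + Real.sin t • (Matrix.of fun q c' => if c' = k then cc * w q else 0)) j
            = Matrix.of (fun x c' => if c' = k
                then Real.cos t * rblk V j x k + Real.sin t * (cc * w ⟨j, x⟩)
                else rblk V j x c') := by
          ext x c'
          by_cases hck : c' = k
          · simp [rblk, hck]; ring
          · simp [rblk, hck]
        rw [hform]
        have hworth : ∀ c', ∑ x, rblk V j x c' * (cc * w ⟨j, x⟩) = 0 := by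
          intro c'
          have hb : ∑ q, V q c' * w q = ∑ x, V ⟨j, x⟩ c' * w ⟨j, x⟩ :=
            sd_blocksum j _ (fun q hq => by rw [hsupp q hq, mul_zero])
          have h2 : ∑ x, rblk V j x c' * (cc * w ⟨j, x⟩)
              = cc * ∑ x, V ⟨j, x⟩ c' * w ⟨j, x⟩ := by
            rw [Finset.mul_sum]
            refine Finset.sum_congr rfl fun x _ => ?_
            show V ⟨j, x⟩ c' * (cc * w ⟨j, x⟩) = _
            ring
          rw [h2, ← hb, horth c', mul_zero]
        have hwnorm : ∑ x, (cc * w ⟨j, x⟩) * (cc * w ⟨j, x⟩) = 1 := by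
          have hb : ∑ q, w q * w q = ∑ x, w ⟨j, x⟩ * w ⟨j, x⟩ :=
            sd_blocksum j _ (fun q hq => by rw [hsupp q hq, mul_zero])
          have h2 : ∑ x, (cc * w ⟨j, x⟩) * (cc * w ⟨j, x⟩)
              = cc ^ 2 * ∑ x, w ⟨j, x⟩ * w ⟨j, x⟩ := by
            rw [Finset.mul_sum]
            exact Finset.sum_congr rfl fun x _ => by ring
          rw [h2, ← hb, hcs]
        exact sd_pert1 (hV j) k (fun x => cc * w ⟨j, x⟩) hworth hwnorm
          (Real.cos t) (Real.sin t) (Real.cos_sq_add_sin_sq t)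
      · have hform : rblk (V + (Real.cos t - 1) •
              (Matrix.of fun q c' => if q.1 = i ∧ c' = k then V q k else 0)
              + Real.sin t • (Matrix.of fun q c' => if c' = k then cc * w q else 0)) j
            = rblk V j := by
          ext x c'
          simp only [rblk, Matrix.of_apply, Matrix.add_apply, Matrix.smul_apply, smul_eq_mul]
          rw [if_neg (fun h : (⟨j, x⟩ : Idx d).1 = i ∧ c' = k => hj h.1), hsupp ⟨j, x⟩ hj]
          simp
        rw [hform]
        exact hV j
    have h0 := sd_master hm S hSsymm V hsol _ _ hfeas
    rw [sd_trace_col S hSsymm V (fun q => cc * w q) k] at h0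
    have h2 : cc * ∑ q, w q * (S * V) q k = 0 := by
      rw [Finset.mul_sum, ← h0]
      exact Finset.sum_congr rfl fun q _ => by ring
    rcases mul_eq_zero.mp h2 with h | h
    · exact absurd h hccpos.ne'
    · exact h

private lemma sd_lamsymm (hm : 0 < m) (S : Matrix (Idx d) (Idx d) ℝ) (hSsymm : S.IsSymm)
    (V : Matrix (Idx d) (Fin r) ℝ) (hV : ∀ i, SemiOrth (rblk V i))
    (hsol : IsRankSol r S (V * Vᵀ)) (i : Fin m) :
    ((rblk V i)ᵀ * rblk (S * V) i)ᵀ = (rblk V i)ᵀ * rblk (S * V) i := by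
  ext k l
  rw [Matrix.transpose_apply]
  by_cases hkl : k = l
  · rw [hkl]
  · have hfeas : ∀ t : ℝ, ∀ j, SemiOrth (rblk
        (V + (Real.cos t - 1) • (Matrix.of fun q c =>
            if q.1 = i ∧ c = k then V q k else if q.1 = i ∧ c = l then V q l else 0)
          + Real.sin t • (Matrix.of fun q c =>
            if q.1 = i ∧ c = k then V q l else if q.1 = i ∧ c = l then -V q k else 0)) j) := by
      intro t j
      by_cases hj : j = i
      · subst hj
        have hform : rblk (V + (Real.cos t - 1) • (Matrix.of fun q c =>
              if q.1 = j ∧ c = k then V q k else if q.1 = j ∧ c = l then V q l else 0)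
            + Real.sin t • (Matrix.of fun q c =>
              if q.1 = j ∧ c = k then V q l else if q.1 = j ∧ c = l then -V q k else 0)) j
            = Matrix.of (fun x c =>
              if c = k then Real.cos t * rblk V j x k + Real.sin t * rblk V j x l
              else if c = l then Real.cos t * rblk V j x l - Real.sin t * rblk V j x k
              else rblk V j x c) := by
          ext x c
          have hlk : ¬ (l = k) := fun h => hkl h.symm
          by_cases hck : c = k
          · simp [rblk, hck, hkl]; ring
          · by_cases hcl : c = l
            · simp [rblk, hck, hcl, hlk]; ring
            · simp [rblk, hck, hcl]
        rw [hform]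
        exact sd_rot (hV j) k l hkl (Real.cos t) (Real.sin t) (Real.cos_sq_add_sin_sq t)
      · have hform : rblk (V + (Real.cos t - 1) • (Matrix.of fun q c =>
              if q.1 = i ∧ c = k then V q k else if q.1 = i ∧ c = l then V q l else 0)
            + Real.sin t • (Matrix.of fun q c =>
              if q.1 = i ∧ c = k then V q l else if q.1 = i ∧ c = l then -V q k else 0)) j
            = rblk V j := by
          ext x c
          simp only [rblk, Matrix.of_apply, Matrix.add_apply, Matrix.smul_apply, smul_eq_mul]
          rw [if_neg (fun h : (⟨j, x⟩ : Idx d).1 = i ∧ c = k => hj h.1),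
            if_neg (fun h : (⟨j, x⟩ : Idx d).1 = i ∧ c = l => hj h.1),
            if_neg (fun h : (⟨j, x⟩ : Idx d).1 = i ∧ c = k => hj h.1),
            if_neg (fun h : (⟨j, x⟩ : Idx d).1 = i ∧ c = l => hj h.1)]
          ring
        rw [hform]
        exact hV j
    have h0 := sd_master hm S hSsymm V hsol _ _ hfeas
    have hB : (Matrix.of fun (q : Idx d) c =>
          if q.1 = i ∧ c = k then V q l else if q.1 = i ∧ c = l then -V q k else 0)
        = (Matrix.of fun (q : Idx d) c => if c = k then (if q.1 = i then V q l else 0) else 0)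
          + (Matrix.of fun (q : Idx d) c => if c = l then (if q.1 = i then -V q k else 0) else 0) := by
      ext q c
      simp only [Matrix.add_apply, Matrix.of_apply]
      by_cases hck : c = k
      · by_cases hqi : q.1 = i
        · rw [if_pos (⟨hqi, hck⟩ : q.1 = i ∧ c = k), if_pos hck, if_pos hqi,
            if_neg (fun h : c = l => hkl (hck.symm.trans h)), add_zero]
        · rw [if_neg (fun h : q.1 = i ∧ c = k => hqi h.1),
            if_neg (fun h : q.1 = i ∧ c = l => hqi h.1), if_pos hck, if_neg hqi,
            if_neg (fun h : c = l => hkl (hck.symm.trans h)), add_zero]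
      · by_cases hcl : c = l
        · by_cases hqi : q.1 = i
          · rw [if_neg (fun h : q.1 = i ∧ c = k => hck h.2),
              if_pos (⟨hqi, hcl⟩ : q.1 = i ∧ c = l), if_neg hck, if_pos hcl, if_pos hqi, zero_add]
          · rw [if_neg (fun h : q.1 = i ∧ c = k => hck h.2),
              if_neg (fun h : q.1 = i ∧ c = l => hqi h.1), if_neg hck, if_pos hcl, if_neg hqi,
              zero_add]
        · rw [if_neg (fun h : q.1 = i ∧ c = k => hck h.2),
            if_neg (fun h : q.1 = i ∧ c = l => hcl h.2), if_neg hck, if_neg hcl, add_zero]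
    rw [hB, Matrix.add_mul, Matrix.mul_add, Matrix.trace_add,
      sd_trace_col S hSsymm V (fun q => if q.1 = i then V q l else 0) k,
      sd_trace_col S hSsymm V (fun q => if q.1 = i then -V q k else 0) l] at h0
    have e1 : ∑ q, (if q.1 = i then V q l else 0) * (S * V) q k
        = ∑ x, V ⟨i, x⟩ l * (S * V) ⟨i, x⟩ k := by
      rw [sd_blocksum i _ (fun q hq => by rw [if_neg hq, zero_mul])]
      exact Finset.sum_congr rfl fun x _ => by rw [if_pos rfl]
    have e2 : ∑ q, (if q.1 = i then -V q k else 0) * (S * V) q l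
        = -∑ x, V ⟨i, x⟩ k * (S * V) ⟨i, x⟩ l := by
      rw [sd_blocksum i _ (fun q hq => by rw [if_neg hq, zero_mul]), ← Finset.sum_neg_distrib]
      exact Finset.sum_congr rfl fun x _ => by rw [if_pos rfl]; ring
    rw [e1, e2] at h0
    have goalL : ((rblk V i)ᵀ * rblk (S * V) i) l k = ∑ x, V ⟨i, x⟩ l * (S * V) ⟨i, x⟩ k := rfl
    have goalR : ((rblk V i)ᵀ * rblk (S * V) i) k l = ∑ x, V ⟨i, x⟩ k * (S * V) ⟨i, x⟩ l := rfl
    rw [goalL, goalR]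
    linarith [h0]

private lemma sd_projgrad (hm : 0 < m) (S : Matrix (Idx d) (Idx d) ℝ) (hSsymm : S.IsSymm)
    (V : Matrix (Idx d) (Fin r) ℝ) (hV : ∀ i, SemiOrth (rblk V i))
    (hsol : IsRankSol r S (V * Vᵀ)) (i : Fin m) :
    rblk V i * ((rblk V i)ᵀ * rblk (S * V) i) = rblk (S * V) i := by
  ext x k
  have hE : ∀ c c' : Fin r, ∑ y, V ⟨i, y⟩ c * V ⟨i, y⟩ c' = if c = c' then (1:ℝ) else 0 :=
    fun c c' => by simpa [rblk] using sd_entries (hV i) c c'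
  set L := fun c : Fin r => ∑ z, V ⟨i, z⟩ c * (S * V) ⟨i, z⟩ k with hL
  show ∑ c, V ⟨i, x⟩ c * L c = (S * V) ⟨i, x⟩ k
  have horthblk : ∀ c', ∑ y, V ⟨i, y⟩ c' * ((S * V) ⟨i, y⟩ k - ∑ c, V ⟨i, y⟩ c * L c) = 0 := by
    intro c'
    have h1 : ∑ y, V ⟨i, y⟩ c' * ((S * V) ⟨i, y⟩ k - ∑ c, V ⟨i, y⟩ c * L c)
        = (∑ y, V ⟨i, y⟩ c' * (S * V) ⟨i, y⟩ k) - ∑ y, V ⟨i, y⟩ c' * ∑ c, V ⟨i, y⟩ c * L c := by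
      rw [← Finset.sum_sub_distrib]
      exact Finset.sum_congr rfl fun y _ => by ring
    rw [h1]
    have h2 : ∑ y, V ⟨i, y⟩ c' * ∑ c, V ⟨i, y⟩ c * L c
        = ∑ c, (∑ y, V ⟨i, y⟩ c' * V ⟨i, y⟩ c) * L c := by
      have e : ∀ y ∈ Finset.univ (α := Fin (d i)), V ⟨i, y⟩ c' * ∑ c, V ⟨i, y⟩ c * L c
          = ∑ c, V ⟨i, y⟩ c' * V ⟨i, y⟩ c * L c := fun y _ => by
        rw [Finset.mul_sum]
        exact Finset.sum_congr rfl fun c _ => by ring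
      rw [Finset.sum_congr rfl e, Finset.sum_comm]
      exact Finset.sum_congr rfl fun c _ => by rw [Finset.sum_mul]
    rw [h2]
    have h3 : ∑ c, (∑ y, V ⟨i, y⟩ c' * V ⟨i, y⟩ c) * L c = L c' := by
      have e : ∀ c ∈ Finset.univ (α := Fin r), (∑ y, V ⟨i, y⟩ c' * V ⟨i, y⟩ c) * L c
          = (if c' = c then (1:ℝ) else 0) * L c := fun c _ => by rw [hE c' c]
      rw [Finset.sum_congr rfl e]
      simp [ite_mul, zero_mul, one_mul, Finset.sum_ite_eq, Finset.mem_univ]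
    rw [h3]
    exact sub_self _
  have main : ∑ y, ((S * V) ⟨i, y⟩ k - ∑ c, V ⟨i, y⟩ c * L c) * (S * V) ⟨i, y⟩ k = 0 := by
    have horthfull : ∀ c', ∑ q, V q c' *
        (if q.1 = i then (S * V) q k - ∑ c, V q c * L c else 0) = 0 := by
      intro c'
      have e : ∀ y ∈ Finset.univ (α := Fin (d i)),
          V ⟨i, y⟩ c' * (if (⟨i, y⟩ : Idx d).1 = i
            then (S * V) ⟨i, y⟩ k - ∑ c, V ⟨i, y⟩ c * L c else 0)
          = V ⟨i, y⟩ c' * ((S * V) ⟨i, y⟩ k - ∑ c, V ⟨i, y⟩ c * L c) :=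
        fun y _ => by rw [if_pos rfl]
      exact (sd_blocksum i
          (fun q => V q c' * (if q.1 = i then (S * V) q k - ∑ c, V q c * L c else 0))
          (fun q hq => by simp [hq])).trans
        ((Finset.sum_congr rfl e).trans (horthblk c'))
    have h0 := sd_orth hm S hSsymm V hV hsol i k
      (fun q => if q.1 = i then (S * V) q k - ∑ c, V q c * L c else 0)
      (fun q hq => if_neg hq) horthfull
    have h0' : ∑ y, (if (⟨i, y⟩ : Idx d).1 = i
          then (S * V) ⟨i, y⟩ k - ∑ c, V ⟨i, y⟩ c * L c else 0) * (S * V) ⟨i, y⟩ k = 0 :=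
      (sd_blocksum i
        (fun q => (if q.1 = i then (S * V) q k - ∑ c, V q c * L c else 0) * (S * V) q k)
        (fun q hq => by simp [hq])).symm.trans h0
    have e : ∑ y, (if (⟨i, y⟩ : Idx d).1 = i
          then (S * V) ⟨i, y⟩ k - ∑ c, V ⟨i, y⟩ c * L c else 0) * (S * V) ⟨i, y⟩ k
        = ∑ y, ((S * V) ⟨i, y⟩ k - ∑ c, V ⟨i, y⟩ c * L c) * (S * V) ⟨i, y⟩ k :=
      Finset.sum_congr rfl fun y _ => by rw [if_pos rfl]
    rw [e] at h0'
    exact h0'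
  have aux : ∑ y, ((S * V) ⟨i, y⟩ k - ∑ c, V ⟨i, y⟩ c * L c) * (∑ c, V ⟨i, y⟩ c * L c) = 0 := by
    have h1 : ∑ y, ((S * V) ⟨i, y⟩ k - ∑ c, V ⟨i, y⟩ c * L c) * (∑ c, V ⟨i, y⟩ c * L c)
        = ∑ c, (∑ y, V ⟨i, y⟩ c * ((S * V) ⟨i, y⟩ k - ∑ c'', V ⟨i, y⟩ c'' * L c'')) * L c := by
      have e : ∀ y ∈ Finset.univ (α := Fin (d i)),
          ((S * V) ⟨i, y⟩ k - ∑ c, V ⟨i, y⟩ c * L c) * (∑ c, V ⟨i, y⟩ c * L c)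
          = ∑ c, V ⟨i, y⟩ c * ((S * V) ⟨i, y⟩ k - ∑ c'', V ⟨i, y⟩ c'' * L c'') * L c := fun y _ => by
        rw [Finset.mul_sum]
        exact Finset.sum_congr rfl fun c _ => by ring
      rw [Finset.sum_congr rfl e, Finset.sum_comm]
      exact Finset.sum_congr rfl fun c _ => by rw [Finset.sum_mul]
    rw [h1]
    refine Finset.sum_eq_zero fun c _ => ?_
    rw [horthblk c, zero_mul]
  have hsq : ∑ y, ((S * V) ⟨i, y⟩ k - ∑ c, V ⟨i, y⟩ c * L c)
      * ((S * V) ⟨i, y⟩ k - ∑ c, V ⟨i, y⟩ c * L c) = 0 := by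
    have e : ∀ y ∈ Finset.univ (α := Fin (d i)),
        ((S * V) ⟨i, y⟩ k - ∑ c, V ⟨i, y⟩ c * L c) * ((S * V) ⟨i, y⟩ k - ∑ c, V ⟨i, y⟩ c * L c)
        = ((S * V) ⟨i, y⟩ k - ∑ c, V ⟨i, y⟩ c * L c) * (S * V) ⟨i, y⟩ k
          - ((S * V) ⟨i, y⟩ k - ∑ c, V ⟨i, y⟩ c * L c) * (∑ c, V ⟨i, y⟩ c * L c) :=
      fun y _ => by ring
    rw [Finset.sum_congr rfl e, Finset.sum_sub_distrib, main, aux, sub_zero]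
  have hx := (Finset.sum_eq_zero_iff_of_nonneg (fun y _ => mul_self_nonneg _)).mp hsq x
    (Finset.mem_univ x)
  have hx2 := mul_self_eq_zero.mp hx
  linarith [hx2]

end SDHelper

/-- Lemma 4.5: the first-order decomposition `S = S⁽¹⁾ + S⁽²⁾` of a solution
of the rank-constrained problem, where `S⁽²⁾` is block diagonal with
`S⁽²⁾_ii = (∑ j S_ij Ṽ_j) Ṽ_iᵀ`, satisfies `S⁽¹⁾ Ṽ = 0`, `Ṽᵀ S⁽¹⁾ = 0` and
`Ṽ_i Ṽ_iᵀ S⁽²⁾_ii Ṽ_i Ṽ_iᵀ = S⁽²⁾_ii`. -/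
theorem stationary_decomposition {m r : ℕ} (hm : 0 < m) (hr : 0 < r)
    {d : Fin m → ℕ} (hd : ∀ i, r ≤ d i)
    (S : Matrix (Idx d) (Idx d) ℝ) (hSsymm : S.IsSymm)
    (V : Matrix (Idx d) (Fin r) ℝ) (hV : ∀ i, SemiOrth (rblk V i))
    (hsol : IsRankSol r S (V * Vᵀ))
    (S1 S2 : Matrix (Idx d) (Idx d) ℝ)
    (hS2bd : ∀ i j, i ≠ j → blk S2 i j = 0)
    (hS2d : ∀ i, blk S2 i i = (∑ j, blk S i j * rblk V j) * (rblk V i)ᵀ)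
    (hS1 : S1 = S - S2) :
    S1 * V = 0 ∧ Vᵀ * S1 = 0 ∧
      ∀ i, rblk V i * (rblk V i)ᵀ * blk S2 i i * (rblk V i * (rblk V i)ᵀ) = blk S2 i i := by
  have hG : ∀ i, rblk (S * V) i = ∑ j, blk S i j * rblk V j := fun i => sd_rblk_mul S V i
  have hproj : ∀ i, rblk V i * ((rblk V i)ᵀ * rblk (S * V) i) = rblk (S * V) i :=
    fun i => sd_projgrad hm S hSsymm V hV hsol i
  have hproj' : ∀ i, rblk V i * (rblk V i)ᵀ * rblk (S * V) i = rblk (S * V) i := by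
    intro i
    rw [Matrix.mul_assoc]
    exact hproj i
  have hlam : ∀ i, ((rblk V i)ᵀ * rblk (S * V) i)ᵀ = (rblk V i)ᵀ * rblk (S * V) i :=
    fun i => sd_lamsymm hm S hSsymm V hV hsol i
  have hS2ii : ∀ i, blk S2 i i = rblk (S * V) i * (rblk V i)ᵀ := by
    intro i
    rw [hS2d i, ← hG i]
  have goal1 : S1 * V = 0 := by
    apply sd_zero_of_rblk
    intro i
    have hOO : (rblk V i)ᵀ * rblk V i = 1 := hV i
    have hsub : S1 * V = S * V - S2 * V := by rw [hS1, Matrix.sub_mul]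
    rw [hsub, sd_rblk_sub, sd_rblk_mul S2 V i]
    have hsum : ∑ j, blk S2 i j * rblk V j = blk S2 i i * rblk V i :=
      Finset.sum_eq_single i (fun j _ hj => by rw [hS2bd i j (Ne.symm hj), Matrix.zero_mul])
        (fun h => absurd (Finset.mem_univ i) h)
    rw [hsum, hS2ii i, Matrix.mul_assoc, hOO, Matrix.mul_one, sub_self]
  have goal2 : Vᵀ * S1 = 0 := by
    have h0 : S1ᵀ * V = 0 := by
      apply sd_zero_of_rblk
      intro i
      have hS1T : S1ᵀ = S - S2ᵀ := by rw [hS1, Matrix.transpose_sub, hSsymm.eq]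
      rw [hS1T, Matrix.sub_mul, sd_rblk_sub, sd_rblk_mul S2ᵀ V i]
      have hsum : ∑ j, blk S2ᵀ i j * rblk V j = blk S2ᵀ i i * rblk V i :=
        Finset.sum_eq_single i (fun j _ hj => by
            rw [sd_blk_transpose, hS2bd j i hj, Matrix.transpose_zero, Matrix.zero_mul])
          (fun h => absurd (Finset.mem_univ i) h)
      rw [hsum, sd_blk_transpose, hS2ii i, Matrix.transpose_mul, Matrix.transpose_transpose]
      have h2 : rblk V i * (rblk (S * V) i)ᵀ * rblk V i = rblk (S * V) i := by
        rw [Matrix.mul_assoc]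
        have h3 : (rblk (S * V) i)ᵀ * rblk V i = (rblk V i)ᵀ * rblk (S * V) i := by
          calc (rblk (S * V) i)ᵀ * rblk V i = ((rblk V i)ᵀ * rblk (S * V) i)ᵀ := by
                rw [Matrix.transpose_mul, Matrix.transpose_transpose]
            _ = (rblk V i)ᵀ * rblk (S * V) i := hlam i
        rw [h3]
        exact hproj i
      rw [h2, sub_self]
    calc Vᵀ * S1 = (S1ᵀ * V)ᵀ := by rw [Matrix.transpose_mul, Matrix.transpose_transpose]
      _ = 0 := by rw [h0, Matrix.transpose_zero]
  refine ⟨goal1, goal2, ?_⟩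
  intro i
  have hOO : (rblk V i)ᵀ * rblk V i = 1 := hV i
  rw [hS2ii i]
  simp only [← Matrix.mul_assoc]
  rw [hproj' i, Matrix.mul_assoc (rblk (S * V) i) (rblk V i)ᵀ (rblk V i), hOO, Matrix.mul_one]
end
end

section
/- Let (O_1,…,O_m) be a critical point of the OTSM problem with Lagrange multipliers Λ_i = O_iᵀ(Σ_{j=1}^m S_ij O_j), and let O ∈ ℝ^{D×r} stack O_1,…,O_m. Under the MAXBET model, for every i, ‖Λ_i − m·I_r‖ ≤ ‖Σ_{j=1}^m W_ijO_j‖ + m‖O_iᵀΘ_i − I_r‖ + ‖ΘᵀO − m·I_r‖. Under the MAXDIFF model, for every i, ‖Λ_i − (m−1)·I_r‖ ≤ ‖Σ_{j≠i} W_ijO_j‖ + m‖O_iᵀΘ_i − I_r‖ + ‖ΘᵀO − m·I_r‖. -/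
open Matrix BigOperators MeasureTheory ProbabilityTheory

noncomputable section

section SpecAux

open scoped Matrix.Norms.L2Operator

lemma specNorm_def' {α β : Type*} [Fintype α] [Fintype β] [DecidableEq β] (A : Matrix α β ℝ) :
    specNorm A = ‖A‖ := rfl

lemma l2_norm_transpose {α β : Type*} [Fintype α] [Fintype β] [DecidableEq α] [DecidableEq β]
    (A : Matrix α β ℝ) : ‖Aᵀ‖ = ‖A‖ := by
  rw [← Matrix.l2_opNorm_conjTranspose A, Matrix.conjTranspose_eq_transpose_of_trivial]

lemma l2_norm_one {r : ℕ} (hr : 0 < r) : ‖(1 : Matrix (Fin r) (Fin r) ℝ)‖ = 1 := by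
  haveI : Nonempty (Fin r) := ⟨⟨0, hr⟩⟩
  rw [Matrix.l2_opNorm_def]
  have h2 : (Matrix.toEuclideanLin.trans LinearMap.toContinuousLinearMap)
      (1 : Matrix (Fin r) (Fin r) ℝ) = ContinuousLinearMap.id ℝ (EuclideanSpace ℝ (Fin r)) := by
    ext x
    simp [Matrix.toEuclideanLin]
  rw [h2]
  exact ContinuousLinearMap.norm_id

lemma l2_norm_semiOrth {n r : ℕ} (hr : 0 < r) {O : Matrix (Fin n) (Fin r) ℝ}
    (h : SemiOrth O) : ‖O‖ = 1 := by
  have hOt : Oᴴ = Oᵀ := Matrix.conjTranspose_eq_transpose_of_trivial O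
  have h2 : ‖O‖ * ‖O‖ = 1 := by
    rw [← Matrix.l2_opNorm_conjTranspose_mul_self, hOt, h, l2_norm_one hr]
  nlinarith [norm_nonneg O]

lemma stackT_mul {m r : ℕ} {d : Fin m → ℕ} (A B : ∀ i, Matrix (Fin (d i)) (Fin r) ℝ) :
    (stack A)ᵀ * stack B = ∑ i, (A i)ᵀ * B i := by
  ext c c'
  simp only [Matrix.mul_apply, Matrix.transpose_apply, Matrix.sum_apply, stack, Matrix.of_apply]
  rw [← Finset.univ_sigma_univ, Finset.sum_sigma]

lemma specNorm_nonneg {α β : Type*} [Fintype α] [Fintype β] [DecidableEq β]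
    (A : Matrix α β ℝ) : 0 ≤ specNorm A := by
  simp only [specNorm_def']; exact norm_nonneg A

lemma specNorm_add_le {α β : Type*} [Fintype α] [Fintype β] [DecidableEq β]
    (A B : Matrix α β ℝ) : specNorm (A + B) ≤ specNorm A + specNorm B := by
  simp only [specNorm_def']; exact norm_add_le A B

lemma specNorm_sum_le {α β ι : Type*} [Fintype α] [Fintype β] [DecidableEq β]
    (s : Finset ι) (f : ι → Matrix α β ℝ) :
    specNorm (∑ j ∈ s, f j) ≤ ∑ j ∈ s, specNorm (f j) := by
  simp only [specNorm_def']; exact norm_sum_le s f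

lemma specNorm_mul_le {α β γ : Type*} [Fintype α] [Fintype β] [Fintype γ]
    [DecidableEq β] [DecidableEq γ] (A : Matrix α β ℝ) (B : Matrix β γ ℝ) :
    specNorm (A * B) ≤ specNorm A * specNorm B := by
  simp only [specNorm_def']; exact Matrix.l2_opNorm_mul A B

lemma specNorm_transpose {α β : Type*} [Fintype α] [Fintype β] [DecidableEq α] [DecidableEq β]
    (A : Matrix α β ℝ) : specNorm Aᵀ = specNorm A := by
  simp only [specNorm_def']; exact l2_norm_transpose A

lemma specNorm_neg {α β : Type*} [Fintype α] [Fintype β] [DecidableEq β]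
    (A : Matrix α β ℝ) : specNorm (-A) = specNorm A := by
  simp only [specNorm_def']; exact norm_neg A

lemma specNorm_one {r : ℕ} (hr : 0 < r) : specNorm (1 : Matrix (Fin r) (Fin r) ℝ) = 1 := by
  simp only [specNorm_def']; exact l2_norm_one hr

lemma specNorm_semiOrth {n r : ℕ} (hr : 0 < r) {O : Matrix (Fin n) (Fin r) ℝ}
    (h : SemiOrth O) : specNorm O = 1 := by
  simp only [specNorm_def']; exact l2_norm_semiOrth hr h

end SpecAux

/-- Lemma 5.3: bounds on the Lagrange multipliers of a critical point,
under the MAXBET and the MAXDIFF models respectively. -/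
theorem lagrange_multiplier_bounds {m r : ℕ} (hm : 0 < m) (hr : 0 < r)
    {d : Fin m → ℕ} (hd : ∀ i, r ≤ d i)
    (Θ : ∀ i, Matrix (Fin (d i)) (Fin r) ℝ) (hΘ : ∀ i, SemiOrth (Θ i))
    (S W : Matrix (Idx d) (Idx d) ℝ)
    (O : ∀ i, Matrix (Fin (d i)) (Fin r) ℝ) (hcrit : IsCritical S O) :
    (MAXBET S W Θ → ∀ i,
      specNorm (lagrange S O i - (m : ℝ) • (1 : Matrix (Fin r) (Fin r) ℝ)) ≤
        specNorm (∑ j, blk W i j * O j) +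
          m * specNorm ((O i)ᵀ * Θ i - 1) +
          specNorm ((stack Θ)ᵀ * stack O - (m : ℝ) • (1 : Matrix (Fin r) (Fin r) ℝ))) ∧
    (MAXDIFF S W Θ → ∀ i,
      specNorm (lagrange S O i - ((m : ℝ) - 1) • (1 : Matrix (Fin r) (Fin r) ℝ)) ≤
        specNorm (∑ j ∈ Finset.univ.erase i, blk W i j * O j) +
          m * specNorm ((O i)ᵀ * Θ i - 1) +
          specNorm ((stack Θ)ᵀ * stack O - (m : ℝ) • (1 : Matrix (Fin r) (Fin r) ℝ))) := by
  classical
  have hOn : ∀ j, specNorm (O j) = 1 := fun j => specNorm_semiOrth hr (hcrit.1 j)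
  have hΘn : ∀ j, specNorm (Θ j) = 1 := fun j => specNorm_semiOrth hr (hΘ j)
  have hOtn : ∀ j, specNorm (O j)ᵀ = 1 := fun j => by rw [specNorm_transpose]; exact hOn j
  have hΘtn : ∀ j, specNorm (Θ j)ᵀ = 1 := fun j => by rw [specNorm_transpose]; exact hΘn j
  have hT : (stack Θ)ᵀ * stack O = ∑ j, (Θ j)ᵀ * O j := stackT_mul Θ O
  constructor
  · rintro ⟨hWsym, hS⟩ i
    have hsum : ∑ j, blk S i j * O j
        = Θ i * ((stack Θ)ᵀ * stack O) + ∑ j, blk W i j * O j := by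
      rw [hT, Matrix.mul_sum, ← Finset.sum_add_distrib]
      refine Finset.sum_congr rfl fun j _ => ?_
      rw [hS i j, Matrix.add_mul, Matrix.mul_assoc]
    have key : lagrange S O i - (m : ℝ) • (1 : Matrix (Fin r) (Fin r) ℝ)
        = (O i)ᵀ * (∑ j, blk W i j * O j)
          + ((O i)ᵀ * Θ i - 1) * ((stack Θ)ᵀ * stack O)
          + ((stack Θ)ᵀ * stack O - (m : ℝ) • (1 : Matrix (Fin r) (Fin r) ℝ)) := by
      rw [lagrange, hsum, Matrix.mul_add, ← Matrix.mul_assoc, Matrix.sub_mul, Matrix.one_mul]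
      abel
    rw [key]
    have h1 : specNorm ((O i)ᵀ * (∑ j, blk W i j * O j))
        ≤ specNorm (∑ j, blk W i j * O j) := by
      refine le_trans (specNorm_mul_le _ _) ?_
      rw [hOtn i, one_mul]
    have hTle : specNorm ((stack Θ)ᵀ * stack O) ≤ (m : ℝ) := by
      rw [hT]
      refine le_trans (specNorm_sum_le _ _) ?_
      have hb : ∀ j ∈ Finset.univ, specNorm ((Θ j)ᵀ * O j) ≤ 1 := fun j _ => by
        refine le_trans (specNorm_mul_le _ _) ?_
        rw [hΘtn j, hOn j, one_mul]
      refine le_trans (Finset.sum_le_sum hb) ?_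
      simp
    have h2 : specNorm (((O i)ᵀ * Θ i - 1) * ((stack Θ)ᵀ * stack O))
        ≤ (m : ℝ) * specNorm ((O i)ᵀ * Θ i - 1) := by
      refine le_trans (specNorm_mul_le _ _) ?_
      rw [mul_comm]
      exact mul_le_mul_of_nonneg_right hTle (specNorm_nonneg _)
    have h3 := specNorm_add_le
      ((O i)ᵀ * (∑ j, blk W i j * O j) + ((O i)ᵀ * Θ i - 1) * ((stack Θ)ᵀ * stack O))
      ((stack Θ)ᵀ * stack O - (m : ℝ) • (1 : Matrix (Fin r) (Fin r) ℝ))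
    have h4 := specNorm_add_le
      ((O i)ᵀ * (∑ j, blk W i j * O j))
      (((O i)ᵀ * Θ i - 1) * ((stack Θ)ᵀ * stack O))
    linarith
  · rintro ⟨hWsym, hWii, hSii, hS⟩ i
    have herase : ∑ j ∈ Finset.univ.erase i, (Θ j)ᵀ * O j
        = (stack Θ)ᵀ * stack O - (Θ i)ᵀ * O i := by
      have h := Finset.sum_erase_add Finset.univ (fun j => (Θ j)ᵀ * O j) (Finset.mem_univ i)
      rw [hT, ← h]
      abel
    have hsum : ∑ j, blk S i j * O j
        = Θ i * ((stack Θ)ᵀ * stack O - (Θ i)ᵀ * O i)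
          + ∑ j ∈ Finset.univ.erase i, blk W i j * O j := by
      have h0 : ∑ j, blk S i j * O j = ∑ j ∈ Finset.univ.erase i, blk S i j * O j := by
        rw [← Finset.sum_erase_add Finset.univ _ (Finset.mem_univ i), hSii i,
          Matrix.zero_mul, add_zero]
      rw [h0, ← herase, Matrix.mul_sum, ← Finset.sum_add_distrib]
      refine Finset.sum_congr rfl fun j hj => ?_
      rw [hS i j (Ne.symm (Finset.ne_of_mem_erase hj)), Matrix.add_mul, Matrix.mul_assoc]
    have key : lagrange S O i - ((m : ℝ) - 1) • (1 : Matrix (Fin r) (Fin r) ℝ)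
        = (O i)ᵀ * (∑ j ∈ Finset.univ.erase i, blk W i j * O j)
          + ((O i)ᵀ * Θ i - 1) * ((stack Θ)ᵀ * stack O - (Θ i)ᵀ * O i)
          + ((stack Θ)ᵀ * stack O - (m : ℝ) • (1 : Matrix (Fin r) (Fin r) ℝ))
          + ((1 : Matrix (Fin r) (Fin r) ℝ) - (Θ i)ᵀ * O i) := by
      rw [lagrange, hsum, Matrix.mul_add, ← Matrix.mul_assoc, Matrix.sub_mul, Matrix.one_mul,
        sub_smul, one_smul]
      abel
    rw [key]
    have h1 : specNorm ((O i)ᵀ * (∑ j ∈ Finset.univ.erase i, blk W i j * O j))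
        ≤ specNorm (∑ j ∈ Finset.univ.erase i, blk W i j * O j) := by
      refine le_trans (specNorm_mul_le _ _) ?_
      rw [hOtn i, one_mul]
    have hTle : specNorm ((stack Θ)ᵀ * stack O - (Θ i)ᵀ * O i) ≤ (m : ℝ) - 1 := by
      rw [← herase]
      refine le_trans (specNorm_sum_le _ _) ?_
      have hb : ∀ j ∈ Finset.univ.erase i, specNorm ((Θ j)ᵀ * O j) ≤ 1 := fun j _ => by
        refine le_trans (specNorm_mul_le _ _) ?_
        rw [hΘtn j, hOn j, one_mul]
      refine le_trans (Finset.sum_le_sum hb) ?_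
      rw [Finset.sum_const, Finset.card_erase_of_mem (Finset.mem_univ i), Finset.card_univ,
        Fintype.card_fin, nsmul_eq_mul, mul_one, Nat.cast_sub hm, Nat.cast_one]
    have h2 : specNorm (((O i)ᵀ * Θ i - 1) * ((stack Θ)ᵀ * stack O - (Θ i)ᵀ * O i))
        ≤ ((m : ℝ) - 1) * specNorm ((O i)ᵀ * Θ i - 1) := by
      refine le_trans (specNorm_mul_le _ _) ?_
      rw [mul_comm]
      exact mul_le_mul_of_nonneg_right hTle (specNorm_nonneg _)
    have h3 : specNorm ((1 : Matrix (Fin r) (Fin r) ℝ) - (Θ i)ᵀ * O i)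
        = specNorm ((O i)ᵀ * Θ i - 1) := by
      have heq : (1 : Matrix (Fin r) (Fin r) ℝ) - (Θ i)ᵀ * O i
          = -(((O i)ᵀ * Θ i - 1)ᵀ) := by
        rw [Matrix.transpose_sub, Matrix.transpose_mul, Matrix.transpose_transpose,
          Matrix.transpose_one, neg_sub]
      rw [heq, specNorm_neg, specNorm_transpose]
    have h4 := specNorm_add_le
      ((O i)ᵀ * (∑ j ∈ Finset.univ.erase i, blk W i j * O j)
        + ((O i)ᵀ * Θ i - 1) * ((stack Θ)ᵀ * stack O - (Θ i)ᵀ * O i)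
        + ((stack Θ)ᵀ * stack O - (m : ℝ) • (1 : Matrix (Fin r) (Fin r) ℝ)))
      ((1 : Matrix (Fin r) (Fin r) ℝ) - (Θ i)ᵀ * O i)
    have h5 := specNorm_add_le
      ((O i)ᵀ * (∑ j ∈ Finset.univ.erase i, blk W i j * O j)
        + ((O i)ᵀ * Θ i - 1) * ((stack Θ)ᵀ * stack O - (Θ i)ᵀ * O i))
      ((stack Θ)ᵀ * stack O - (m : ℝ) • (1 : Matrix (Fin r) (Fin r) ℝ))
    have h6 := specNorm_add_le
      ((O i)ᵀ * (∑ j ∈ Finset.univ.erase i, blk W i j * O j))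
      (((O i)ᵀ * Θ i - 1) * ((stack Θ)ᵀ * stack O - (Θ i)ᵀ * O i))
    linarith
end
end

section
/- Assume the MAXBET model. Let (O_1,…,O_m) be a candidate critical point of the OTSM problem with multipliers Λ_i, let τ_i denote the smallest eigenvalue of Λ_i, let O ∈ ℝ^{D×r} stack O_1,…,O_m, and define L ∈ ℝ^{D×D} as the block-diagonal matrix with i-th diagonal block O_iΛ_iO_iᵀ + τ_i(I_{d_i} − O_iO_iᵀ), minus S. If m ≥ ‖ΘᵀO − m·I_r‖ + ‖Θ − O‖² + max_{1≤i≤m}‖[WO]_i‖ + m·max_{1≤i≤m}‖O_iᵀΘ_i − I_r‖ + ‖W‖, then L is positive semidefinite (so the certificate of global optimality of (O_1,…,O_m) holds). -/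
open Matrix BigOperators MeasureTheory ProbabilityTheory

noncomputable section

/-!
Write `L = B - S` with `B` block diagonal. The identity
`Λ_i = O_iᵀΘ_i (ΘᵀO) + O_iᵀ[WO]_i` exhibits `Λ_i` as a perturbation of `ΘᵀO ≈ m I`, so its
smallest eigenvalue is at least `m - ‖ΘᵀO - m I‖ - m ‖O_iᵀΘ_i - I‖ - ‖[WO]_i‖ ≥ κ`, the same
bound with maxima over `i`; hence every diagonal block of `B` is `≥ κ I`. At a critical point
`L O = 0`, so the symmetric `L` equals `Q L Q` for the orthogonal projection `Q` onto the
complement of the columns of `O`. As `Q O = 0`, conjugating by `Q` turns `ΘΘᵀ` into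
`(Θ - O)(Θ - O)ᵀ ≤ ‖Θ - O‖² I`, whence `L = Q (B - W - (Θ - O)(Θ - O)ᵀ) Q` with middle factor
`≥ (κ - ‖W‖ - ‖Θ - O‖²) I ≥ 0`.
-/

open scoped Matrix.Norms.L2Operator MatrixOrder

lemma specNorm_eq_norm {n k : Type*} [Fintype n] [Fintype k] [DecidableEq k]
    (A : Matrix n k ℝ) : specNorm A = ‖A‖ :=
  rfl

namespace Matrix

lemma IsSymm.isSelfAdjoint {n : Type*} {A : Matrix n n ℝ} (hA : A.IsSymm) : IsSelfAdjoint A := by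
  rwa [IsSelfAdjoint, star_eq_conjTranspose, conjTranspose_eq_transpose_of_trivial]

section L2OpNorm

variable {n k : Type*} [Fintype n] [DecidableEq n] [Fintype k] [DecidableEq k]

lemma l2_opNorm_one_le : ‖(1 : Matrix n n ℝ)‖ ≤ 1 := by
  rcases subsingleton_or_nontrivial (Matrix n n ℝ) with h | h
  · rw [Subsingleton.elim (1 : Matrix n n ℝ) 0, norm_zero]
    exact zero_le_one
  · exact norm_one.le

omit [DecidableEq n] in
lemma norm_le_sqrt_of_transpose_mul_self {A : Matrix n k ℝ} {c : ℝ} (hc : 0 ≤ c)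
    (hA : Aᵀ * A = c • 1) : ‖A‖ ≤ √c := by
  have h := l2_opNorm_conjTranspose_mul_self A
  rw [conjTranspose_eq_transpose_of_trivial, hA, norm_smul, Real.norm_of_nonneg hc] at h
  refine Real.le_sqrt_of_sq_le ?_
  nlinarith [mul_le_mul_of_nonneg_left (l2_opNorm_one_le (n := k)) hc]

lemma sub_norm_sub_smul_one_le_of_mem_spectrum {A : Matrix n n ℝ} {t : ℝ}
    (ht : t ∈ spectrum ℝ A) (μ : ℝ) : μ - ‖A - μ • 1‖ ≤ t := by
  obtain h | h := subsingleton_or_nontrivial (Matrix n n ℝ)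
  · rw [spectrum.of_subsingleton] at ht
    exact ht.elim
  have hmem : t - μ ∈ spectrum ℝ (A - μ • 1) := by
    rw [← Algebra.algebraMap_eq_smul_one, ← spectrum.sub_singleton_eq]
    exact Set.sub_mem_sub ht rfl
  have := spectrum.norm_le_norm_of_mem hmem
  rw [Real.norm_eq_abs] at this
  linarith [neg_abs_le (t - μ)]

lemma IsSymm.smul_one_le_of_le_spectrum {A : Matrix n n ℝ} (hA : A.IsSymm) {t : ℝ}
    (ht : ∀ x ∈ spectrum ℝ A, t ≤ x) : t • 1 ≤ A := by
  rw [← Algebra.algebraMap_eq_smul_one]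
  exact (algebraMap_le_iff_le_spectrum hA.isSelfAdjoint).2 ht

lemma IsSymm.le_norm_smul_one {A : Matrix n n ℝ} (hA : A.IsSymm) : A ≤ ‖A‖ • 1 := by
  rcases subsingleton_or_nontrivial (Matrix n n ℝ) with h | h
  · exact (Subsingleton.elim _ _).le
  · rw [← Algebra.algebraMap_eq_smul_one]
    exact le_algebraMap_of_spectrum_le (fun x hx => (Real.le_norm_self x).trans
      (spectrum.norm_le_norm_of_mem hx)) hA.isSelfAdjoint

lemma mul_transpose_self_le_norm_sq_smul_one (A : Matrix n k ℝ) : A * Aᵀ ≤ (‖A‖ ^ 2) • 1 := by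
  have hnorm : ‖A * Aᵀ‖ = ‖A‖ ^ 2 := by
    have h := l2_opNorm_conjTranspose_mul_self Aᴴ
    rwa [conjTranspose_conjTranspose, l2_opNorm_conjTranspose,
      conjTranspose_eq_transpose_of_trivial, ← sq] at h
  have hsymm : (A * Aᵀ).IsSymm := by
    rw [IsSymm, transpose_mul, transpose_transpose]
  rw [← hnorm]
  exact hsymm.le_norm_smul_one

end L2OpNorm

section LoewnerOrder

variable {n : Type*} [DecidableEq n]

lemma smul_one_le_smul_one {a b : ℝ} (hab : a ≤ b) : a • (1 : Matrix n n ℝ) ≤ b • 1 := by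
  rw [← sub_nonneg, ← sub_smul]
  exact (PosSemidef.one.smul (sub_nonneg.2 hab)).nonneg

variable {o : Type*} [Fintype o] [DecidableEq o] {p : o → Type*} [∀ i, Fintype (p i)]
  [∀ i, DecidableEq (p i)] {M : ∀ i, Matrix (p i) (p i) ℝ}

lemma blockDiagonal'_nonneg (hM : ∀ i, 0 ≤ M i) : 0 ≤ blockDiagonal' M := by
  have hsqrt : blockDiagonal' M =
      star (blockDiagonal' fun i => CFC.sqrt (M i)) * blockDiagonal' fun i => CFC.sqrt (M i) := by
    rw [star_eq_conjTranspose, blockDiagonal'_conjTranspose, ← blockDiagonal'_mul]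
    congr 1
    funext i
    rw [← star_eq_conjTranspose, (CFC.sqrt_nonneg (M i)).isSelfAdjoint.star_eq,
      CFC.sqrt_mul_sqrt_self (M i) (hM i)]
  rw [hsqrt]
  exact star_mul_self_nonneg _

lemma smul_one_le_blockDiagonal' {t : ℝ} (hM : ∀ i, t • 1 ≤ M i) : t • 1 ≤ blockDiagonal' M := by
  have h : blockDiagonal' M - t • 1 = blockDiagonal' fun i => M i - t • 1 := by
    rw [← blockDiagonal'_one, ← blockDiagonal'_smul, ← blockDiagonal'_sub]
    rfl
  rw [← sub_nonneg, h]
  exact blockDiagonal'_nonneg fun i => sub_nonneg.2 (hM i)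

end LoewnerOrder

section Projection

variable {n k : Type*} [Fintype n] [Fintype k] {V : Matrix n k ℝ}

lemma IsSymm.exists_conj_eq_self_of_mul_eq_zero [DecidableEq n] [DecidableEq k]
    {L : Matrix n n ℝ} (hL : L.IsSymm) (hLV : L * V = 0) {c : ℝ} (hc : c ≠ 0)
    (hV : Vᵀ * V = c • 1) : ∃ Q : Matrix n n ℝ, Q.IsSymm ∧ Q * V = 0 ∧ Q * L * Q = L := by
  have hVL : Vᵀ * L = 0 := by rw [← hL.eq, ← transpose_mul, hLV, transpose_zero]
  refine ⟨1 - c⁻¹ • (V * Vᵀ), ?_, ?_, ?_⟩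
  · simp [IsSymm, transpose_sub, transpose_smul, transpose_mul]
  · rw [Matrix.sub_mul, Matrix.one_mul, Matrix.smul_mul, Matrix.mul_assoc, hV, Matrix.mul_smul,
      Matrix.mul_one, smul_smul, inv_mul_cancel₀ hc, one_smul, sub_self]
  · simp only [Matrix.sub_mul, Matrix.mul_sub, Matrix.one_mul, Matrix.mul_one, Matrix.smul_mul,
      Matrix.mul_smul, Matrix.mul_assoc, hVL, ← Matrix.mul_assoc L, hLV]
    simp

lemma conj_sub_mul_transpose_sub {Q : Matrix n n ℝ} (hQ : Q.IsSymm) (hQV : Q * V = 0)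
    (M : Matrix n n ℝ) (A : Matrix n k ℝ) :
    Q * (M - (A - V) * (A - V)ᵀ) * Q = Q * (M - A * Aᵀ) * Q := by
  have hQA : Q * (A - V) = Q * A := by rw [Matrix.mul_sub, hQV, sub_zero]
  have hAQ : (A - V)ᵀ * Q = Aᵀ * Q := by
    rw [← hQ.eq, ← transpose_mul, hQA, transpose_mul]
  have h : Q * ((A - V) * (A - V)ᵀ) * Q = Q * (A * Aᵀ) * Q := by
    rw [Matrix.mul_assoc, Matrix.mul_assoc, hAQ, ← Matrix.mul_assoc, hQA]
    simp only [Matrix.mul_assoc]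
  rw [Matrix.mul_sub, Matrix.sub_mul, h, ← Matrix.sub_mul, ← Matrix.mul_sub]

end Projection

end Matrix

def certBlock {n k : Type*} [Fintype k] [DecidableEq n] (O : Matrix n k ℝ) (Λ : Matrix k k ℝ)
    (τ : ℝ) : Matrix n n ℝ :=
  O * Λ * Oᵀ + τ • (1 - O * Oᵀ)

section CertBlock

variable {n k : Type*} [Fintype k] [DecidableEq n] {O : Matrix n k ℝ} {Λ : Matrix k k ℝ} {τ : ℝ}

lemma certBlock_mul_self [Fintype n] [DecidableEq k] (hO : Oᵀ * O = 1) :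
    certBlock O Λ τ * O = O * Λ := by
  rw [certBlock, Matrix.add_mul, Matrix.mul_assoc (O * Λ), hO, Matrix.mul_one, Matrix.smul_mul,
    Matrix.sub_mul, Matrix.one_mul, Matrix.mul_assoc, hO, Matrix.mul_one, sub_self, smul_zero,
    add_zero]

lemma certBlock_isSymm (hΛ : Λ.IsSymm) : (certBlock O Λ τ).IsSymm := by
  simp [certBlock, IsSymm, transpose_add, transpose_smul, transpose_sub, transpose_mul, hΛ.eq,
    Matrix.mul_assoc]

lemma smul_one_le_certBlock [Fintype n] [DecidableEq k] {κ : ℝ} (hΛ : τ • 1 ≤ Λ) (hκ : κ ≤ τ) :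
    κ • 1 ≤ certBlock O Λ τ := by
  have h : certBlock O Λ τ - κ • 1 = O * (Λ - τ • 1) * Oᵀ + (τ - κ) • 1 := by
    simp only [certBlock, Matrix.mul_sub, Matrix.sub_mul, Matrix.mul_smul, Matrix.smul_mul,
      Matrix.mul_one, smul_sub, sub_smul]
    abel
  rw [← sub_nonneg, h]
  refine add_nonneg ?_ ?_
  · rw [← conjTranspose_eq_transpose_of_trivial]
    exact ((Matrix.le_iff.1 hΛ).mul_mul_conjTranspose_same O).nonneg
  · exact (PosSemidef.one.smul (sub_nonneg.2 hκ)).nonneg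

end CertBlock

section BlockMatrices

variable {m r : ℕ} {d : Fin m → ℕ}

lemma ext_blk {A B : Matrix (Idx d) (Idx d) ℝ} (h : ∀ i j, blk A i j = blk B i j) : A = B := by
  ext ⟨i, a⟩ ⟨j, b⟩
  exact congrFun (congrFun (h i j) a) b

lemma ext_rblk {V V' : Matrix (Idx d) (Fin r) ℝ} (h : ∀ i, rblk V i = rblk V' i) : V = V' := by
  ext ⟨i, a⟩ c
  exact congrFun (congrFun (h i) a) c

lemma blk_blockDiagonal'_self (B : ∀ i, Matrix (Fin (d i)) (Fin (d i)) ℝ) (i : Fin m) :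
    blk (blockDiagonal' B) i i = B i := by
  ext a b
  exact blockDiagonal'_apply_eq B i a b

lemma blk_blockDiagonal'_of_ne (B : ∀ i, Matrix (Fin (d i)) (Fin (d i)) ℝ) {i j : Fin m}
    (hij : i ≠ j) : blk (blockDiagonal' B) i j = 0 := by
  ext a b
  exact blockDiagonal'_apply_ne B a b hij

lemma transpose_stack_mul_stack (A B : ∀ i, Matrix (Fin (d i)) (Fin r) ℝ) :
    (stack A)ᵀ * stack B = ∑ i, (A i)ᵀ * B i := by
  ext k l
  simp only [mul_apply, transpose_apply, stack, of_apply, Matrix.sum_apply]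
  exact Fintype.sum_sigma _

lemma transpose_stack_mul_self {O : ∀ i, Matrix (Fin (d i)) (Fin r) ℝ}
    (hO : ∀ i, SemiOrth (O i)) : (stack O)ᵀ * stack O = (m : ℝ) • 1 := by
  rw [transpose_stack_mul_stack, Finset.sum_congr rfl fun i _ => hO i, Finset.sum_const,
    Finset.card_univ, Fintype.card_fin, Nat.cast_smul_eq_nsmul]

lemma rblk_mul_stack (M : Matrix (Idx d) (Idx d) ℝ) (O : ∀ i, Matrix (Fin (d i)) (Fin r) ℝ)
    (i : Fin m) : rblk (M * stack O) i = ∑ j, blk M i j * O j := by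
  ext a k
  simp only [rblk, blk, stack, mul_apply, of_apply, Matrix.sum_apply]
  exact Fintype.sum_sigma _

lemma blockDiagonal'_mul_stack (B : ∀ i, Matrix (Fin (d i)) (Fin (d i)) ℝ)
    (O : ∀ i, Matrix (Fin (d i)) (Fin r) ℝ) :
    blockDiagonal' B * stack O = stack fun i => B i * O i := by
  refine ext_rblk fun i => ?_
  rw [rblk_mul_stack, Finset.sum_eq_single i
    (fun j _ hji => by rw [blk_blockDiagonal'_of_ne B hji.symm, Matrix.zero_mul])
    (fun hi => absurd (Finset.mem_univ i) hi), blk_blockDiagonal'_self]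
  rfl

lemma eq_blockDiagonal'_sub_of_blk {L S : Matrix (Idx d) (Idx d) ℝ}
    (B : ∀ i, Matrix (Fin (d i)) (Fin (d i)) ℝ) (hdiag : ∀ i, blk L i i = B i - blk S i i)
    (hoff : ∀ i j, i ≠ j → blk L i j = -blk S i j) : L = blockDiagonal' B - S := by
  refine ext_blk fun i j => ?_
  change blk L i j = blk (blockDiagonal' B) i j - blk S i j
  rcases eq_or_ne i j with rfl | hij
  · rw [blk_blockDiagonal'_self, hdiag]
  · rw [blk_blockDiagonal'_of_ne B hij, hoff i j hij, zero_sub]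

end BlockMatrices

def certMatrix {m r : ℕ} {d : Fin m → ℕ} (S : Matrix (Idx d) (Idx d) ℝ)
    (O : ∀ i, Matrix (Fin (d i)) (Fin r) ℝ) (τ : Fin m → ℝ) : Matrix (Idx d) (Idx d) ℝ :=
  blockDiagonal' (fun i => certBlock (O i) (lagrange S O i) (τ i)) - S

section OTSM

variable {m r : ℕ} {d : Fin m → ℕ} {S W : Matrix (Idx d) (Idx d) ℝ}
  {Θ O : ∀ i, Matrix (Fin (d i)) (Fin r) ℝ}

lemma IsCritical.mul_stack (h : IsCritical S O) :
    S * stack O = stack fun i => O i * lagrange S O i :=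
  ext_rblk fun i => by rw [rblk_mul_stack, ← (h.2 i).2]; rfl

lemma IsCritical.certMatrix_mul_stack (h : IsCritical S O) (τ : Fin m → ℝ) :
    certMatrix S O τ * stack O = 0 := by
  simp only [certMatrix, Matrix.sub_mul, blockDiagonal'_mul_stack, h.mul_stack,
    certBlock_mul_self (h.1 _), sub_self]

lemma IsCritical.isSymm_certMatrix (h : IsCritical S O) (hS : S.IsSymm) (τ : Fin m → ℝ) :
    (certMatrix S O τ).IsSymm := by
  rw [certMatrix, IsSymm, transpose_sub, blockDiagonal'_transpose, hS.eq]
  simp only [(certBlock_isSymm (h.2 _).1).eq]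

lemma MAXBET.eq (h : MAXBET S W Θ) : S = stack Θ * (stack Θ)ᵀ + W :=
  ext_blk fun i j => h.2 i j

lemma MAXBET.isSymm (h : MAXBET S W Θ) : S.IsSymm := by
  rw [h.eq, IsSymm, transpose_add, transpose_mul, transpose_transpose, h.1.eq]

lemma MAXBET.lagrange_eq (h : MAXBET S W Θ) (i : Fin m) :
    lagrange S O i = (O i)ᵀ * Θ i * ((stack Θ)ᵀ * stack O) + (O i)ᵀ * rblk (W * stack O) i := by
  rw [lagrange, ← rblk_mul_stack, h.eq, Matrix.add_mul, Matrix.mul_assoc]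
  change (O i)ᵀ * (Θ i * ((stack Θ)ᵀ * stack O) + rblk (W * stack O) i) = _
  rw [Matrix.mul_add, Matrix.mul_assoc]

lemma MAXBET.norm_lagrange_sub_smul_one_le (h : MAXBET S W Θ) (hΘ : ∀ i, SemiOrth (Θ i))
    (hO : ∀ i, SemiOrth (O i)) (i : Fin m) :
    ‖lagrange S O i - (m : ℝ) • 1‖ ≤ ‖(stack Θ)ᵀ * stack O - (m : ℝ) • 1‖ +
      m * ‖(O i)ᵀ * Θ i - 1‖ + ‖rblk (W * stack O) i‖ := by
  set G := (stack Θ)ᵀ * stack O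
  have hm : (0 : ℝ) ≤ m := m.cast_nonneg
  have hG : ‖G‖ ≤ m := calc
    ‖G‖ ≤ ‖(stack Θ)ᵀ‖ * ‖stack O‖ := l2_opNorm_mul _ _
    _ ≤ √m * √m := by
      rw [← conjTranspose_eq_transpose_of_trivial, l2_opNorm_conjTranspose]
      gcongr
      · exact norm_le_sqrt_of_transpose_mul_self hm (transpose_stack_mul_self hΘ)
      · exact norm_le_sqrt_of_transpose_mul_self hm (transpose_stack_mul_self hO)
    _ = m := Real.mul_self_sqrt hm
  have hOi : ‖(O i)ᵀ‖ ≤ 1 := by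
    rw [← conjTranspose_eq_transpose_of_trivial, l2_opNorm_conjTranspose, ← Real.sqrt_one]
    exact norm_le_sqrt_of_transpose_mul_self zero_le_one (by rw [one_smul]; exact hO i)
  have hsplit : lagrange S O i - (m : ℝ) • 1 =
      (G - (m : ℝ) • 1) + ((O i)ᵀ * Θ i - 1) * G + (O i)ᵀ * rblk (W * stack O) i := by
    rw [h.lagrange_eq, Matrix.sub_mul, Matrix.one_mul]
    abel
  rw [hsplit]
  calc _ ≤ ‖G - (m : ℝ) • 1‖ + ‖((O i)ᵀ * Θ i - 1) * G‖ + ‖(O i)ᵀ * rblk (W * stack O) i‖ :=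
        norm_add₃_le
    _ ≤ ‖G - (m : ℝ) • 1‖ + ‖(O i)ᵀ * Θ i - 1‖ * m + 1 * ‖rblk (W * stack O) i‖ := by
        gcongr
        · exact (l2_opNorm_mul _ _).trans (by gcongr)
        · exact (l2_opNorm_mul _ _).trans (by gcongr)
    _ = _ := by ring

lemma MAXBET.sub_le_of_mem_spectrum_lagrange (h : MAXBET S W Θ) (hΘ : ∀ i, SemiOrth (Θ i))
    (hO : ∀ i, SemiOrth (O i)) {i : Fin m} {t : ℝ} (ht : t ∈ spectrum ℝ (lagrange S O i)) :
    (m : ℝ) - (‖(stack Θ)ᵀ * stack O - (m : ℝ) • 1‖ + m * (⨆ j, ‖(O j)ᵀ * Θ j - 1‖) +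
      ⨆ j, ‖rblk (W * stack O) j‖) ≤ t := by
  have hF := le_ciSup (Finite.bddAbove_range fun j => ‖(O j)ᵀ * Θ j - 1‖) i
  have hR := le_ciSup (Finite.bddAbove_range fun j => ‖rblk (W * stack O) j‖) i
  linarith [mul_le_mul_of_nonneg_left hF m.cast_nonneg,
    sub_norm_sub_smul_one_le_of_mem_spectrum ht (m : ℝ), h.norm_lagrange_sub_smul_one_le hΘ hO i]

end OTSM

theorem certificate_L_psd_general {m r : ℕ} (hm : 0 < m)
    {d : Fin m → ℕ}
    (Θ : ∀ i, Matrix (Fin (d i)) (Fin r) ℝ) (hΘ : ∀ i, SemiOrth (Θ i))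
    (S W : Matrix (Idx d) (Idx d) ℝ) (hmodel : MAXBET S W Θ)
    (O : ∀ i, Matrix (Fin (d i)) (Fin r) ℝ) (hcand : IsCandidate S O)
    (τ : Fin m → ℝ) (hτ : ∀ i, IsLeast (spectrum ℝ (lagrange S O i)) (τ i))
    (L : Matrix (Idx d) (Idx d) ℝ)
    (hLdiag : ∀ i, blk L i i =
      O i * lagrange S O i * (O i)ᵀ +
        τ i • ((1 : Matrix (Fin (d i)) (Fin (d i)) ℝ) - O i * (O i)ᵀ) - blk S i i)
    (hLoff : ∀ i j, i ≠ j → blk L i j = -blk S i j)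
    (hcond : specNorm ((stack Θ)ᵀ * stack O - (m : ℝ) • (1 : Matrix (Fin r) (Fin r) ℝ)) +
        specNorm (stack Θ - stack O) ^ 2 +
        (⨆ i, specNorm (rblk (W * stack O) i)) +
        m * (⨆ i, specNorm ((O i)ᵀ * Θ i - 1)) +
        specNorm W ≤ (m : ℝ)) :
    L.PosSemidef := by
  obtain ⟨hcrit, -⟩ := hcand
  simp only [specNorm_eq_norm] at hcond
  obtain rfl : L = certMatrix S O τ := eq_blockDiagonal'_sub_of_blk _ hLdiag hLoff
  set κ := (m : ℝ) - (‖(stack Θ)ᵀ * stack O - (m : ℝ) • 1‖ +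
    m * (⨆ i, ‖(O i)ᵀ * Θ i - 1‖) + ⨆ i, ‖rblk (W * stack O) i‖)
  have hκ : ∀ i, κ ≤ τ i := fun i => hmodel.sub_le_of_mem_spectrum_lagrange hΘ hcrit.1 (hτ i).1
  set B := blockDiagonal' fun i => certBlock (O i) (lagrange S O i) (τ i)
  have hM : (stack Θ - stack O) * (stack Θ - stack O)ᵀ + W ≤ B := calc
    _ ≤ ‖stack Θ - stack O‖ ^ 2 • 1 + ‖W‖ • 1 :=
      add_le_add (mul_transpose_self_le_norm_sq_smul_one _) hmodel.1.le_norm_smul_one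
    _ = (‖stack Θ - stack O‖ ^ 2 + ‖W‖) • 1 := (add_smul _ _ _).symm
    _ ≤ κ • 1 := smul_one_le_smul_one (by linarith)
    _ ≤ _ := smul_one_le_blockDiagonal' fun i =>
      smul_one_le_certBlock ((hcrit.2 i).1.smul_one_le_of_le_spectrum (hτ i).2) (hκ i)
  obtain ⟨Q, hQ, hQO, hQL⟩ :=
    (hcrit.isSymm_certMatrix hmodel.isSymm τ).exists_conj_eq_self_of_mul_eq_zero
      (hcrit.certMatrix_mul_stack τ) (Nat.cast_ne_zero.2 hm.ne') (transpose_stack_mul_self hcrit.1)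
  have hL : certMatrix S O τ = B - W - stack Θ * (stack Θ)ᵀ := by
    rw [← sub_add_eq_sub_sub_swap, ← hmodel.eq]
    rfl
  rw [← nonneg_iff_posSemidef, ← hQL, hL, ← conj_sub_mul_transpose_sub hQ hQO]
  exact hQ.isSelfAdjoint.conjugate_nonneg (sub_nonneg.2 (le_sub_iff_add_le.2 hM))

/-- under the MAXBET model, if the noise condition (5.6) holds, then the
certificate matrix `L` of a candidate critical point is positive semidefinite. -/
theorem certificate_L_psd {m r : ℕ} (hm : 0 < m) (hr : 0 < r)
    {d : Fin m → ℕ} (hd : ∀ i, r ≤ d i)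
    (Θ : ∀ i, Matrix (Fin (d i)) (Fin r) ℝ) (hΘ : ∀ i, SemiOrth (Θ i))
    (S W : Matrix (Idx d) (Idx d) ℝ) (hmodel : MAXBET S W Θ)
    (O : ∀ i, Matrix (Fin (d i)) (Fin r) ℝ) (hcand : IsCandidate S O)
    (τ : Fin m → ℝ) (hτ : ∀ i, IsLeast (spectrum ℝ (lagrange S O i)) (τ i))
    (L : Matrix (Idx d) (Idx d) ℝ)
    (hLdiag : ∀ i, blk L i i =
      O i * lagrange S O i * (O i)ᵀ +
        τ i • ((1 : Matrix (Fin (d i)) (Fin (d i)) ℝ) - O i * (O i)ᵀ) - blk S i i)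
    (hLoff : ∀ i j, i ≠ j → blk L i j = -blk S i j)
    (hcond : specNorm ((stack Θ)ᵀ * stack O - (m : ℝ) • (1 : Matrix (Fin r) (Fin r) ℝ)) +
        specNorm (stack Θ - stack O) ^ 2 +
        (⨆ i, specNorm (rblk (W * stack O) i)) +
        m * (⨆ i, specNorm ((O i)ᵀ * Θ i - 1)) +
        specNorm W ≤ (m : ℝ)) :
    L.PosSemidef :=
  certificate_L_psd_general hm Θ hΘ S W hmodel O hcand τ hτ L hLdiag hLoff hcond
end
end

section
/- Let X, Y ∈ ℝ^{d×r} satisfy XᵀX = YᵀY = I_r, and let A ∈ ℝ^{r×r} be symmetric positive semidefinite with smallest eigenvalue λ_min(A). Then tr((I_r − YᵀX)A) ≥ (1/2)·λ_min(A)·‖X − Y‖_F². -/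
open Matrix BigOperators MeasureTheory ProbabilityTheory

noncomputable section

/-! Expanding `(X - Y)ᵀ (X - Y) = 2 - XᵀY - YᵀX` and using the symmetry of `A` shows that twice
the right-hand side is `tr((X - Y)ᵀ (X - Y) A)`. Since `A - λ_min(A)` is positive semidefinite,
this trace is at least `λ_min(A) tr((X - Y)ᵀ (X - Y)) = λ_min(A) ‖X - Y‖_F²`. -/

namespace Matrix

variable {m n : Type*} [Fintype m] [Fintype n]

lemma frobNorm_sq_eq_trace_transpose_mul_self (M : Matrix m n ℝ) :
    frobNorm M ^ 2 = trace (Mᵀ * M) := by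
  rw [frobNorm, Real.sq_sqrt (by positivity), trace, Finset.sum_comm]
  simp [mul_apply, sq]

lemma IsHermitian.posSemidef_sub_smul_one_of_mem_lowerBounds [DecidableEq n]
    {A : Matrix n n ℝ} (hA : A.IsHermitian) {lam : ℝ} (hlam : lam ∈ lowerBounds (spectrum ℝ A)) :
    (A - lam • 1).PosSemidef := by
  refine posSemidef_iff_isHermitian_and_spectrum_nonneg.mpr
    ⟨hA.sub (isHermitian_one.smul (.all lam)), ?_⟩
  rw [← Algebra.algebraMap_eq_smul_one, ← spectrum.sub_singleton_eq]
  rintro _ ⟨x, hx, _, rfl, rfl⟩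
  exact sub_nonneg.mpr (hlam hx)

lemma mul_trace_le_trace_transpose_mul_self_mul [DecidableEq n] (M : Matrix m n ℝ)
    {A : Matrix n n ℝ} (hA : A.IsHermitian) {lam : ℝ} (hlam : lam ∈ lowerBounds (spectrum ℝ A)) :
    lam * trace (Mᵀ * M) ≤ trace (Mᵀ * M * A) := by
  have hpsd := (hA.posSemidef_sub_smul_one_of_mem_lowerBounds hlam).mul_mul_conjTranspose_same M
  have htrace := hpsd.trace_nonneg
  rw [conjTranspose_eq_transpose_of_trivial, trace_mul_cycle, mul_sub, trace_sub,
    Matrix.mul_smul, Matrix.mul_one, trace_smul, smul_eq_mul] at htrace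
  linarith

lemma trace_transpose_sub_mul_sub_mul [DecidableEq n] {X Y : Matrix m n ℝ}
    (hX : Xᵀ * X = 1) (hY : Yᵀ * Y = 1) {A : Matrix n n ℝ} (hA : A.IsSymm) :
    trace ((X - Y)ᵀ * (X - Y) * A) = 2 * trace ((1 - Yᵀ * X) * A) := by
  have hXY : trace (Xᵀ * Y * A) = trace (Yᵀ * X * A) := by
    rw [← trace_transpose, transpose_mul, transpose_mul, transpose_transpose, hA.eq,
      trace_mul_comm]
  have hexpand : (X - Y)ᵀ * (X - Y) = 1 + 1 - Xᵀ * Y - Yᵀ * X := by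
    rw [transpose_sub, Matrix.sub_mul, Matrix.mul_sub, Matrix.mul_sub, hX, hY]
    abel
  rw [hexpand]
  simp only [Matrix.sub_mul, Matrix.add_mul, Matrix.one_mul, trace_sub, trace_add, hXY]
  ring

end Matrix

theorem semiorth_psd_trace_lower_bound_general {dd r : ℕ}
    (X Y : Matrix (Fin dd) (Fin r) ℝ)
    (hX : Xᵀ * X = 1) (hY : Yᵀ * Y = 1)
    (A : Matrix (Fin r) (Fin r) ℝ) (hA : A.PosSemidef)
    (lam : ℝ) (hlam : IsLeast (spectrum ℝ A) lam) :
    (1 / 2) * lam * frobNorm (X - Y) ^ 2 ≤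
      Matrix.trace (((1 : Matrix (Fin r) (Fin r) ℝ) - Yᵀ * X) * A) := by
  have hbound := mul_trace_le_trace_transpose_mul_self_mul (X - Y) hA.isHermitian hlam.2
  rw [trace_transpose_sub_mul_sub_mul hX hY (isHermitian_iff_isSymm.mp hA.isHermitian)]
    at hbound
  rw [frobNorm_sq_eq_trace_transpose_mul_self]
  linarith

/-- for semi-orthogonal `X, Y` and symmetric positive semidefinite `A` with
smallest eigenvalue `λ_min(A)`, one has `tr((I - YᵀX)A) ≥ (1/2) λ_min(A) ‖X - Y‖_F²`. -/
theorem semiorth_psd_trace_lower_bound {dd r : ℕ} (hdr : r ≤ dd)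
    (X Y : Matrix (Fin dd) (Fin r) ℝ)
    (hX : Xᵀ * X = 1) (hY : Yᵀ * Y = 1)
    (A : Matrix (Fin r) (Fin r) ℝ) (hA : A.PosSemidef)
    (lam : ℝ) (hlam : IsLeast (spectrum ℝ A) lam) :
    (1 / 2) * lam * frobNorm (X - Y) ^ 2 ≤
      Matrix.trace (((1 : Matrix (Fin r) (Fin r) ℝ) - Yᵀ * X) * A) :=
  semiorth_psd_trace_lower_bound_general X Y hX hY A hA lam hlam
end
end
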